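/- arXiv:1407.1116 — 3 statements merged into one kernel-verified Lean document; each statement's English description precedes it below -/
import Mathlib

section
/- There is a constant β > 0 (one may take β = 3/8) such that the following holds. Let G be drawn from the Chung–Lu model G(d), let d ≥ 2 be an integer, let v be a vertex with d_v ≤ d, let e, e′ be two vertex pairs, and let E be the event that both e and e′ are edges of G. Then P[D_v > 3d | E] < exp(−β d). -/
open Finset

noncomputable section
attribute [local instance] Classical.propDecidable

/-- Index type of unordered pairs of distinct vertices, represented by ordered pairs. -/
abbrev EdgeIdx (n : ℕ) := {e : Fin n × Fin n // e.1 < e.2}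

/-- The Chung–Lu probability of a particular outcome `ω : EdgeIdx n → Bool` (which pairs
are edges): each pair `{u,v}` is independently an edge with probability `d_u d_v / (2m)`
where `2m = ∑ d_v`. -/
def clPr {n : ℕ} (d : Fin n → ℕ) (ω : EdgeIdx n → Bool) : ℝ :=
  ∏ e : EdgeIdx n,
    if ω e then (d e.1.1 : ℝ) * (d e.1.2 : ℝ) / (∑ v, (d v : ℝ))
    else 1 - (d e.1.1 : ℝ) * (d e.1.2 : ℝ) / (∑ v, (d v : ℝ))

/-- Expectation over the Chung–Lu random graph. -/
def clExp {n : ℕ} (d : Fin n → ℕ) (g : (EdgeIdx n → Bool) → ℝ) : ℝ :=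
  ∑ ω : EdgeIdx n → Bool, clPr d ω * g ω

/-- Probability of an event over the Chung–Lu random graph. -/
def clProb {n : ℕ} (d : Fin n → ℕ) (A : (EdgeIdx n → Bool) → Prop) : ℝ :=
  ∑ ω ∈ Finset.univ.filter A, clPr d ω

/-- Conditional probability `P[A | E]` over the Chung–Lu random graph. -/
def clCondProb {n : ℕ} (d : Fin n → ℕ) (A E : (EdgeIdx n → Bool) → Prop) : ℝ :=
  clProb d (fun ω => A ω ∧ E ω) / clProb d E

/-- Adjacency of `u` and `v` in the outcome `ω`. -/
def clAdj {n : ℕ} (ω : EdgeIdx n → Bool) (u v : Fin n) : Prop :=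
  ∃ e : EdgeIdx n, ω e = true ∧ ((e.1.1 = u ∧ e.1.2 = v) ∨ (e.1.1 = v ∧ e.1.2 = u))

/-- The degree `D_v` of `v` in the outcome `ω`. -/
def clDeg {n : ℕ} (ω : EdgeIdx n → Bool) (v : Fin n) : ℕ :=
  (Finset.univ.filter fun u => clAdj ω u v).card

/-- The edge `(v,w)` is present and lies in `v`'s bucket:
`(D_v, v) ≤ (D_w, w)` lexicographically. -/
def clInBucket {n : ℕ} (ω : EdgeIdx n → Bool) (v w : Fin n) : Prop :=
  clAdj ω v w ∧ (clDeg ω v < clDeg ω w ∨ (clDeg ω v = clDeg ω w ∧ v ≤ w))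

/-- Indicator `Y_{v,w}` that the edge `(v,w)` is present and in `v`'s bucket. -/
def clY {n : ℕ} (ω : EdgeIdx n → Bool) (v w : Fin n) : ℝ :=
  if clInBucket ω v w then 1 else 0

/-- `X_v`, the number of edges in `v`'s bucket. -/
def clX {n : ℕ} (ω : EdgeIdx n → Bool) (v : Fin n) : ℝ :=
  ∑ w, clY ω v w


set_option maxHeartbeats 2000000

section Helpers

lemma sum_biUnion_le' {ι α : Type*} [DecidableEq α] (f : α → ℝ) (hf : ∀ a, 0 ≤ f a)
    (s : Finset ι) (t : ι → Finset α) :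
    ∑ x ∈ s.biUnion t, f x ≤ ∑ i ∈ s, ∑ x ∈ t i, f x := by
  classical
  induction s using Finset.induction with
  | empty => simp
  | insert a s hx ih =>
    rw [Finset.biUnion_insert, Finset.sum_insert hx]
    calc ∑ x ∈ t a ∪ s.biUnion t, f x
        ≤ ∑ x ∈ t a, f x + ∑ x ∈ s.biUnion t, f x := by
          have h2 := Finset.sum_union_inter (s₁ := t a) (s₂ := s.biUnion t) (f := f)
          have h3 : 0 ≤ ∑ x ∈ t a ∩ s.biUnion t, f x := Finset.sum_nonneg fun x _ => hf x
          linarith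
      _ ≤ ∑ x ∈ t a, f x + ∑ i ∈ s, ∑ x ∈ t i, f x := by linarith

lemma two_term_binom (x y : ℝ) (hx : 0 ≤ x) (hy : 0 ≤ y) (m : ℕ) :
    x ^ (m + 1) + (m + 1 : ℝ) * y * x ^ m ≤ (x + y) ^ (m + 1) := by
  rw [add_pow]
  have hsub : ({m, m + 1} : Finset ℕ) ⊆ Finset.range (m + 2) := by
    intro i hi; simp only [Finset.mem_insert, Finset.mem_singleton] at hi
    rw [Finset.mem_range]; omega
  have hn : ∀ i ∈ Finset.range (m + 2), i ∉ ({m, m + 1} : Finset ℕ) →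
      0 ≤ x ^ i * y ^ (m + 1 - i) * ((m + 1).choose i : ℝ) := by
    intro i _ _; positivity
  have := Finset.sum_le_sum_of_subset_of_nonneg hsub hn
  rw [Finset.sum_pair (by omega : m ≠ m + 1)] at this
  refine le_trans (le_of_eq ?_) this
  rw [Nat.choose_succ_self_right, Nat.choose_self]
  have h1 : m + 1 - m = 1 := by omega
  have h2 : m + 1 - (m + 1) = 0 := by omega
  rw [h1, h2]
  push_cast
  ring

lemma esymm_le {α : Type*} [DecidableEq α] (f : α → ℝ) (s : Finset α)
    (hpos : ∀ a ∈ s, 0 ≤ f a) : ∀ j : ℕ,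
    (j.factorial : ℝ) * ∑ T ∈ s.powersetCard j, ∏ a ∈ T, f a ≤ (∑ a ∈ s, f a) ^ j := by
  classical
  induction s using Finset.induction with
  | empty =>
    intro j
    cases j with
    | zero => simp
    | succ m => rw [Finset.powersetCard_eq_empty.mpr (by simp)]; simp
  | insert a s hx ih =>
    intro j
    have hfa : 0 ≤ f a := hpos a (Finset.mem_insert_self a s)
    have hps : ∀ b ∈ s, 0 ≤ f b := fun b hb => hpos b (Finset.mem_insert_of_mem hb)
    have ih' := ih hps
    cases j with
    | zero => simp
    | succ m =>
      have hSig : 0 ≤ ∑ b ∈ s, f b := Finset.sum_nonneg hps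
      rw [Finset.sum_insert hx, Finset.powersetCard_succ_insert hx]
      have hdisj : Disjoint (s.powersetCard (m + 1)) ((s.powersetCard m).image (insert a)) := by
        rw [Finset.disjoint_left]
        intro T hT hT'
        obtain ⟨T', hT', rfl⟩ := Finset.mem_image.mp hT'
        have := (Finset.mem_powersetCard.mp hT).1 (Finset.mem_insert_self a T')
        exact hx this
      rw [Finset.sum_union hdisj]
      have himg : ∑ T ∈ (s.powersetCard m).image (insert a), ∏ b ∈ T, f b
          = f a * ∑ T ∈ s.powersetCard m, ∏ b ∈ T, f b := by
        rw [Finset.sum_image, Finset.mul_sum]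
        · refine Finset.sum_congr rfl fun T hT => ?_
          have haT : a ∉ T := fun h => hx ((Finset.mem_powersetCard.mp hT).1 h)
          rw [Finset.prod_insert haT]
        · intro T hT T' hT' hins
          have haT : a ∉ T := fun h => hx ((Finset.mem_powersetCard.mp hT).1 h)
          have haT' : a ∉ T' := fun h => hx ((Finset.mem_powersetCard.mp hT').1 h)
          rw [← Finset.erase_insert haT, ← Finset.erase_insert haT', hins]
      rw [himg]
      have key := two_term_binom (∑ b ∈ s, f b) (f a) hSig hfa m
      have ih1 := ih' (m + 1)
      have ihm := ih' m
      have e0 : 0 ≤ ∑ T ∈ s.powersetCard m, ∏ b ∈ T, f b :=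
        Finset.sum_nonneg fun T hT => Finset.prod_nonneg fun b hb =>
          hps b ((Finset.mem_powersetCard.mp hT).1 hb)
      have hfact : ((m + 1).factorial : ℝ) = (m + 1 : ℝ) * (m.factorial : ℝ) := by
        rw [Nat.factorial_succ]; push_cast; ring
      calc ((m+1).factorial : ℝ) * (∑ T ∈ s.powersetCard (m+1), ∏ b ∈ T, f b
              + f a * ∑ T ∈ s.powersetCard m, ∏ b ∈ T, f b)
          = ((m+1).factorial : ℝ) * ∑ T ∈ s.powersetCard (m+1), ∏ b ∈ T, f b
            + (m + 1 : ℝ) * f a * ((m.factorial : ℝ) * ∑ T ∈ s.powersetCard m, ∏ b ∈ T, f b) := by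
            rw [hfact]; ring
        _ ≤ (∑ b ∈ s, f b) ^ (m+1) + (m + 1 : ℝ) * f a * (∑ b ∈ s, f b) ^ m := by
            have h2 : (m + 1 : ℝ) * f a * ((m.factorial : ℝ) * ∑ T ∈ s.powersetCard m, ∏ b ∈ T, f b)
                ≤ (m + 1 : ℝ) * f a * (∑ b ∈ s, f b) ^ m := by
              apply mul_le_mul_of_nonneg_left ihm
              positivity
            linarith
        _ ≤ (∑ b ∈ s, f b + f a) ^ (m + 1) := key
        _ = (f a + ∑ b ∈ s, f b) ^ (m + 1) := by ring

lemma exp_25_8_lt_26 : Real.exp (25 / 8) < 26 := by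
  have h3 : Real.exp 3 < 2.7182818286 ^ 3 := by
    have e3 : Real.exp 3 = Real.exp 1 ^ 3 := by
      rw [Real.exp_one_pow]; norm_num
    rw [e3]
    exact pow_lt_pow_left₀ Real.exp_one_lt_d9 (le_of_lt (Real.exp_pos 1)) (by norm_num)
  have h8 : Real.exp (1 / 8) ≤ 8 / 7 := by
    have h := Real.add_one_le_exp (-(1 / 8) : ℝ)
    rw [Real.exp_neg] at h
    have hpos := Real.exp_pos (1 / 8 : ℝ)
    have hmul : Real.exp (1/8) * (Real.exp (1/8))⁻¹ = 1 := mul_inv_cancel₀ (ne_of_gt hpos)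
    nlinarith
  have hsplit : Real.exp (25 / 8 : ℝ) = Real.exp 3 * Real.exp (1 / 8) := by
    rw [← Real.exp_add]; norm_num
  rw [hsplit]
  nlinarith [Real.exp_pos (1/8 : ℝ), Real.exp_pos (3 : ℝ)]

lemma tail_num (k : ℕ) (hk : 2 ≤ k) :
    (k : ℝ) ^ (3 * k - 1) / ((3 * k - 1).factorial : ℝ) < Real.exp (-(1/8) * k) := by
  set j := 3 * k - 1 with hj
  have hj1 : j + 1 = 3 * k := by omega
  have hj5 : 5 ≤ j := by omega
  have hjj : j - 1 + 1 = j := by omega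
  set x : ℝ := ((3 * k : ℕ) : ℝ) with hx
  have hxval : x = 3 * (k : ℝ) := by rw [hx]; push_cast; ring
  have hxpos : (0:ℝ) < x := by rw [hxval]; positivity
  have hx0 : (0:ℝ) ≤ x := le_of_lt hxpos
  set t : ℝ := x ^ j / (j.factorial : ℝ) with ht
  have ht0 : 0 ≤ t := by positivity
  have hjc : (j : ℝ) + 1 = x := by
    rw [hx]; exact_mod_cast congrArg (Nat.cast (R := ℝ)) hj1
  have hjR : (0:ℝ) < (j:ℝ) := by exact_mod_cast Nat.pos_of_ne_zero (by omega)
  have hfj : (0:ℝ) < (j.factorial : ℝ) := by exact_mod_cast j.factorial_pos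
  have hfj1 : (0:ℝ) < ((j-1).factorial : ℝ) := by exact_mod_cast (j-1).factorial_pos
  have h3 : x ^ (j-1) / ((j-1).factorial : ℝ) + x ^ j / (j.factorial : ℝ)
      + x ^ (j+1) / ((j+1).factorial : ℝ) ≤ Real.exp x := by
    refine le_trans ?_ (Real.sum_le_exp_of_nonneg hx0 (j + 2))
    have hsub : ({j-1, j, j+1} : Finset ℕ) ⊆ Finset.range (j + 2) := by
      intro i hi
      simp only [Finset.mem_insert, Finset.mem_singleton] at hi
      rw [Finset.mem_range]; omega
    refine le_trans (le_of_eq ?_)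
      (Finset.sum_le_sum_of_subset_of_nonneg hsub (fun i _ _ => by positivity))
    rw [Finset.sum_insert (by simp only [Finset.mem_insert, Finset.mem_singleton]; omega),
      Finset.sum_pair (by omega : j ≠ j + 1)]
    ring
  have e1 : x ^ (j+1) / ((j+1).factorial : ℝ) = t := by
    rw [pow_succ, Nat.factorial_succ, ht]
    push_cast
    rw [← hjc]
    field_simp
  have e2 : x ^ (j-1) / ((j-1).factorial : ℝ) = t * (j : ℝ) / x := by
    have hp : x ^ j = x ^ (j-1) * x := by rw [← pow_succ, hjj]
    have hf : (j.factorial : ℝ) = ((j-1).factorial : ℝ) * (j : ℝ) := by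
      have : j.factorial = (j-1).factorial * j := by
        conv_lhs => rw [← hjj]
        rw [Nat.factorial_succ, hjj]; ring
      rw [this]; push_cast; ring
    rw [ht, hp, hf]
    field_simp
  have e3 : t * (5/6) ≤ t * (j : ℝ) / x := by
    have hfr : (5/6 : ℝ) ≤ (j : ℝ) / x := by
      rw [le_div_iff₀ hxpos, hxval]
      have hje : (j:ℝ) = 3 * (k:ℝ) - 1 := by linarith [hjc, hxval]
      rw [hje]
      have hkR : (2:ℝ) ≤ (k:ℝ) := by exact_mod_cast hk
      nlinarith
    calc t * (5/6) ≤ t * ((j:ℝ)/x) := by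
          apply mul_le_mul_of_nonneg_left hfr ht0
      _ = t * (j:ℝ) / x := by ring
  have hkey : (17/6) * t ≤ Real.exp x := by
    rw [e1, e2] at h3
    rw [← ht] at h3
    linarith
  have hmain : (k : ℝ) ^ j / (j.factorial : ℝ) = t / 3 ^ j := by
    rw [ht, hxval, mul_pow]
    field_simp
  rw [hmain]
  have hE : (0:ℝ) < Real.exp (1/8 * (k:ℝ)) := Real.exp_pos _
  have h26 : Real.exp x * Real.exp (1/8 * (k:ℝ)) < 26 ^ k := by
    rw [← Real.exp_add]
    have hadd : x + 1/8 * (k:ℝ) = (k : ℝ) * (25/8) := by rw [hxval]; ring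
    rw [hadd, Real.exp_nat_mul]
    exact pow_lt_pow_left₀ exp_25_8_lt_26 (Real.exp_pos _).le (by omega)
  have h27 : (18/17 : ℝ) * 26 ^ k ≤ 27 ^ k := by
    have h1 : ((27:ℝ)/26) ^ 2 ≤ ((27:ℝ)/26) ^ k := pow_le_pow_right₀ (by norm_num) hk
    have h2 : ((27:ℝ))^k = 26^k * (27/26)^k := by rw [← mul_pow]; norm_num
    nlinarith [pow_pos (show (0:ℝ) < 26 by norm_num) k]
  have h3j : (3:ℝ) ^ j * 3 = 27 ^ k := by
    rw [← pow_succ, hj1, show (27:ℝ) = 3^3 by norm_num, ← pow_mul]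
  have hpow3 : (0:ℝ) < (3:ℝ) ^ j := by positivity
  have hP : t * Real.exp (1/8 * (k:ℝ)) < 3 ^ j := by
    have step1 : t * Real.exp (1/8 * (k:ℝ)) ≤ (6/17) * (Real.exp x * Real.exp (1/8 * (k:ℝ))) := by
      have ht17 : t ≤ (6/17) * Real.exp x := by linarith
      nlinarith
    have step2 : (6/17 : ℝ) * (26 ^ k) ≤ 3 ^ j := by nlinarith
    have h26pos : (0:ℝ) < 26 ^ k := by positivity
    nlinarith
  have hERw : Real.exp (-(1/8) * (k:ℝ)) = (Real.exp (1/8 * (k:ℝ)))⁻¹ := by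
    rw [← Real.exp_neg]; ring_nf
  rw [hERw]
  rw [div_lt_iff₀ hpow3]
  rw [inv_mul_eq_div, lt_div_iff₀ hE]
  linarith

end Helpers

namespace CLAux

def clp {n : ℕ} (d : Fin n → ℕ) (f : EdgeIdx n) : ℝ :=
  (d f.1.1 : ℝ) * (d f.1.2 : ℝ) / (∑ v, (d v : ℝ))

variable {n : ℕ} (d : Fin n → ℕ)

lemma clPr_eq (ω : EdgeIdx n → Bool) :
    clPr d ω = ∏ f : EdgeIdx n, (if ω f then clp d f else 1 - clp d f) := rfl

lemma clProb_congr {A B : (EdgeIdx n → Bool) → Prop} (h : ∀ ω, A ω ↔ B ω) :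
    clProb d A = clProb d B := by
  unfold clProb
  rw [Finset.filter_congr (fun ω _ => h ω)]

lemma clProb_cyl (U : Finset (EdgeIdx n)) :
    clProb d (fun ω => ∀ f ∈ U, ω f = true) = ∏ f ∈ U, clp d f := by
  classical
  have key : ∀ ω : EdgeIdx n → Bool,
      (if (∀ f ∈ U, ω f = true) then clPr d ω else 0)
        = ∏ f : EdgeIdx n,
            (if f ∈ U then (if ω f then clp d f else 0)
             else (if ω f then clp d f else 1 - clp d f)) := by
    intro ω
    by_cases h : ∀ f ∈ U, ω f = true
    · rw [if_pos h, clPr_eq]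
      refine Finset.prod_congr rfl fun f _ => ?_
      by_cases hf : f ∈ U
      · simp [hf, h f hf]
      · simp [hf]
    · rw [if_neg h]
      push_neg at h
      obtain ⟨f₀, hf₀, hω⟩ := h
      refine (Finset.prod_eq_zero (Finset.mem_univ f₀) ?_).symm
      have : ω f₀ = false := by simpa using hω
      simp [hf₀, this]
  have expand := Finset.prod_univ_sum (fun _ : EdgeIdx n => (Finset.univ : Finset Bool))
      (fun f b => if f ∈ U then (if b then clp d f else 0)
        else (if b then clp d f else 1 - clp d f))
  rw [Fintype.piFinset_univ] at expand
  have fact : ∀ f : EdgeIdx n,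
      (∑ b : Bool, (if f ∈ U then (if b then clp d f else 0)
        else (if b then clp d f else 1 - clp d f)))
        = if f ∈ U then clp d f else 1 := by
    intro f
    rw [Fintype.sum_bool]
    by_cases hf : f ∈ U <;> simp [hf]
  calc clProb d (fun ω => ∀ f ∈ U, ω f = true)
      = ∑ ω : EdgeIdx n → Bool, (if (∀ f ∈ U, ω f = true) then clPr d ω else 0) := by
        rw [clProb, Finset.sum_filter]
        exact Finset.sum_congr rfl fun ω _ => by split_ifs <;> rfl
    _ = ∑ ω : EdgeIdx n → Bool, ∏ f : EdgeIdx n,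
          (if f ∈ U then (if ω f then clp d f else 0)
           else (if ω f then clp d f else 1 - clp d f)) :=
        Finset.sum_congr rfl fun ω _ => key ω
    _ = ∏ f : EdgeIdx n, (if f ∈ U then clp d f else 1) := by
        rw [← expand]; exact (Finset.prod_congr rfl fun f _ => fact f)
    _ = ∏ f ∈ U, clp d f := by
        rw [Finset.prod_ite_mem, Finset.univ_inter]

lemma clPr_nonneg (h0 : ∀ f : EdgeIdx n, 0 ≤ clp d f) (h1 : ∀ f : EdgeIdx n, clp d f ≤ 1)
    (ω : EdgeIdx n → Bool) : 0 ≤ clPr d ω := by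
  rw [clPr_eq]
  refine Finset.prod_nonneg fun f _ => ?_
  by_cases hf : ω f = true
  · simp only [hf, if_true]; exact h0 f
  · rw [if_neg hf]; linarith [h1 f]

lemma clProb_mono (h0 : ∀ f : EdgeIdx n, 0 ≤ clp d f) (h1 : ∀ f : EdgeIdx n, clp d f ≤ 1)
    {A B : (EdgeIdx n → Bool) → Prop} (h : ∀ ω, A ω → B ω) :
    clProb d A ≤ clProb d B := by
  refine Finset.sum_le_sum_of_subset_of_nonneg ?_ fun ω _ _ => clPr_nonneg d h0 h1 ω
  intro ω hω
  simp only [Finset.mem_filter] at *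
  exact ⟨hω.1, h ω hω.2⟩

lemma clProb_eq_sum (A : (EdgeIdx n → Bool) → Prop) :
    clProb d A = ∑ ω : EdgeIdx n → Bool, if A ω then clPr d ω else 0 := by
  rw [clProb, Finset.sum_filter]

lemma clProb_union_le {ι : Type*} (h0 : ∀ f : EdgeIdx n, 0 ≤ clp d f)
    (h1 : ∀ f : EdgeIdx n, clp d f ≤ 1) (𝒯 : Finset ι)
    (B : ι → (EdgeIdx n → Bool) → Prop) :
    clProb d (fun ω => ∃ T ∈ 𝒯, B T ω) ≤ ∑ T ∈ 𝒯, clProb d (B T) := by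
  refine le_trans (le_of_eq (clProb_eq_sum d _)) ?_
  have hBT : ∑ T ∈ 𝒯, clProb d (B T)
      = ∑ ω : EdgeIdx n → Bool, ∑ T ∈ 𝒯, (if B T ω then clPr d ω else 0) := by
    rw [Finset.sum_comm]
    exact Finset.sum_congr rfl fun T _ => clProb_eq_sum d (B T)
  rw [hBT]
  refine Finset.sum_le_sum fun ω _ => ?_
  have hnn : ∀ T ∈ 𝒯, 0 ≤ (if B T ω then clPr d ω else 0) := by
    intro T _
    split_ifs
    · exact clPr_nonneg d h0 h1 ω
    · exact le_refl 0
  by_cases h : ∃ T ∈ 𝒯, B T ω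
  · rw [if_pos h]
    obtain ⟨T₀, hT₀, hB₀⟩ := h
    have hle := Finset.single_le_sum (f := fun T => if B T ω then clPr d ω else 0) hnn hT₀
    exact le_trans (le_of_eq (if_pos hB₀).symm) hle
  · rw [if_neg h]
    exact Finset.sum_nonneg hnn

lemma sum_clp_incident (hS : (0:ℝ) < ∑ u, (d u : ℝ)) (v : Fin n) :
    ∑ f ∈ Finset.univ.filter (fun f : EdgeIdx n => f.1.1 = v ∨ f.1.2 = v), clp d f
      ≤ (d v : ℝ) := by
  classical
  set S : ℝ := ∑ u, (d u : ℝ) with hSdef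
  set Inc := Finset.univ.filter (fun f : EdgeIdx n => f.1.1 = v ∨ f.1.2 = v) with hInc
  set other : EdgeIdx n → Fin n := fun f => if f.1.1 = v then f.1.2 else f.1.1 with hother
  have hcase : ∀ f : EdgeIdx n, (f.1.1 = v ∨ f.1.2 = v) →
      (f.1.1 = v ∧ other f = f.1.2 ∧ v < f.1.2) ∨ (f.1.2 = v ∧ other f = f.1.1 ∧ f.1.1 < v) := by
    intro f hf
    by_cases h : f.1.1 = v
    · exact Or.inl ⟨h, by rw [hother]; simp [h], by rw [← h]; exact f.2⟩
    · rcases hf with h' | h'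
      · exact absurd h' h
      · exact Or.inr ⟨h', by rw [hother]; simp [h], by rw [← h']; exact f.2⟩
  have hval : ∀ f ∈ Inc, clp d f = (d v : ℝ) * (d (other f) : ℝ) / S := by
    intro f hf
    rw [hInc, Finset.mem_filter] at hf
    rcases hcase f hf.2 with ⟨h1, h2, _⟩ | ⟨h1, h2, _⟩
    · rw [clp, h2, h1]
    · rw [clp, h2, h1, ← hSdef]; ring
  have hinj : ∀ f ∈ Inc, ∀ g ∈ Inc, other f = other g → f = g := by
    intro f hf g hg hfg
    rw [hInc, Finset.mem_filter] at hf hg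
    apply Subtype.ext
    rcases hcase f hf.2 with ⟨hf1, hf2, hf3⟩ | ⟨hf1, hf2, hf3⟩ <;>
      rcases hcase g hg.2 with ⟨hg1, hg2, hg3⟩ | ⟨hg1, hg2, hg3⟩
    · exact Prod.ext (hf1.trans hg1.symm) (by rw [← hf2, ← hg2, hfg])
    · exfalso
      rw [hf2, hg2] at hfg
      rw [hfg] at hf3
      exact absurd (hf3.trans hg3) (lt_irrefl v)
    · exfalso
      rw [hf2, hg2] at hfg
      rw [← hfg] at hg3
      exact absurd (hg3.trans hf3) (lt_irrefl v)
    · exact Prod.ext (by rw [← hf2, ← hg2, hfg]) (hf1.trans hg1.symm)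
  have step1 : ∑ f ∈ Inc, clp d f = ∑ f ∈ Inc, (d v : ℝ) * (d (other f) : ℝ) / S :=
    Finset.sum_congr rfl hval
  have step2 : ∑ f ∈ Inc, (d v : ℝ) * (d (other f) : ℝ) / S
      = ∑ u ∈ Inc.image other, (d v : ℝ) * (d u : ℝ) / S :=
    (Finset.sum_image (f := fun u => (d v : ℝ) * (d u : ℝ) / S) hinj).symm
  have step3 : ∑ u ∈ Inc.image other, (d v : ℝ) * (d u : ℝ) / S
      ≤ ∑ u : Fin n, (d v : ℝ) * (d u : ℝ) / S := by
    refine Finset.sum_le_sum_of_subset_of_nonneg (Finset.subset_univ _) fun u _ _ => ?_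
    positivity
  have step4 : ∑ u : Fin n, (d v : ℝ) * (d u : ℝ) / S = (d v : ℝ) := by
    rw [← Finset.sum_div, ← Finset.mul_sum, ← hSdef, mul_div_assoc, div_self (ne_of_gt hS),
      mul_one]
  linarith

lemma exists_bucket (ω : EdgeIdx n → Bool) (v : Fin n) (k : ℕ) (hdeg : 3 * k < clDeg ω v)
    (U₀ : Finset (EdgeIdx n)) (hU₀ : U₀.card ≤ 2) :
    ∃ T ∈ ((Finset.univ.filter (fun f : EdgeIdx n => f.1.1 = v ∨ f.1.2 = v))
        \ U₀).powersetCard (3*k-1),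
      ∀ f ∈ T, ω f = true := by
  classical
  set Inc := Finset.univ.filter (fun f : EdgeIdx n => f.1.1 = v ∨ f.1.2 = v) with hInc
  set M := Finset.univ.filter (fun f : EdgeIdx n => ω f = true ∧ (f.1.1 = v ∨ f.1.2 = v)) with hM
  set N := Finset.univ.filter (fun u => clAdj ω u v) with hN
  have hNcard : N.card = clDeg ω v := rfl
  have hNne : N.Nonempty := by
    rw [← Finset.card_pos, hNcard]; omega
  obtain ⟨u₀, hu₀⟩ := hNne
  have h₀ : clAdj ω u₀ v := (Finset.mem_filter.mp hu₀).2
  set f₀ : EdgeIdx n := Classical.choose h₀ with hf₀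
  set φ : Fin n → EdgeIdx n := fun u => if h : clAdj ω u v then Classical.choose h else f₀ with hφ
  have hspec : ∀ u ∈ N, ω (φ u) = true ∧
      (((φ u).1.1 = u ∧ (φ u).1.2 = v) ∨ ((φ u).1.1 = v ∧ (φ u).1.2 = u)) := by
    intro u hu
    have h : clAdj ω u v := (Finset.mem_filter.mp hu).2
    rw [hφ]; simp only [dif_pos h]
    exact Classical.choose_spec h
  have hmaps : ∀ u ∈ N, φ u ∈ M := by
    intro u hu
    obtain ⟨h1, h2⟩ := hspec u hu
    rw [hM, Finset.mem_filter]
    refine ⟨Finset.mem_univ _, h1, ?_⟩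
    rcases h2 with ⟨_, hb⟩ | ⟨ha, _⟩
    · exact Or.inr hb
    · exact Or.inl ha
  have hinj : Set.InjOn φ N := by
    intro u₁ hu₁ u₂ hu₂ heq
    have s₁ := (hspec u₁ (by exact_mod_cast hu₁)).2
    have s₂ := (hspec u₂ (by exact_mod_cast hu₂)).2
    rw [heq] at s₁
    rcases s₁ with ⟨h1, h2⟩ | ⟨h1, h2⟩ <;> rcases s₂ with ⟨h3, h4⟩ | ⟨h3, h4⟩
    · rw [← h1, h3]
    · rw [← h1, h3, ← h4, h2]
    · rw [← h2, h4, ← h3, h1]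
    · rw [← h2, h4]
  have hcard : clDeg ω v ≤ M.card := by
    rw [← hNcard]
    exact Finset.card_le_card_of_injOn φ hmaps hinj
  have hsd := Finset.le_card_sdiff U₀ M
  have hj : 3 * k - 1 ≤ (M \ U₀).card := by omega
  obtain ⟨T, hT1, hT2⟩ := Finset.exists_subset_card_eq hj
  refine ⟨T, Finset.mem_powersetCard.mpr ⟨?_, hT2⟩, ?_⟩
  · refine hT1.trans (Finset.sdiff_subset_sdiff ?_ le_rfl)
    intro f hf
    rw [hM, Finset.mem_filter] at hf
    rw [hInc, Finset.mem_filter]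
    exact ⟨hf.1, hf.2.2⟩
  · intro f hf
    have hfm := hT1 hf
    rw [Finset.mem_sdiff, hM, Finset.mem_filter] at hfm
    exact hfm.1.2.1

end CLAux

/-- There is a constant `β > 0` (one may take `β = 3/8`) such that over
the Chung–Lu model `G(d)`: for every integer `k ≥ 2`, vertex `v` with `d_v ≤ k`, and vertex
pairs `e, e'`, conditioning on the event `E` that both `e` and `e'` are edges,
`P[D_v > 3k | E] < exp(-β k)`. -/
theorem chungLu_degree_upper_tail :
    ∃ β : ℝ, 0 < β ∧
      ∀ (n : ℕ) (d : Fin n → ℕ),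
        (∀ v, 0 < d v) →
        (∀ v, (d v : ℝ) < Real.sqrt ((∑ u, (d u : ℝ)) / 2) / 2) →
        ∀ k : ℕ, 2 ≤ k → ∀ v : Fin n, d v ≤ k →
          ∀ e e' : EdgeIdx n,
            clCondProb d (fun ω => 3 * k < clDeg ω v)
                (fun ω => ω e = true ∧ ω e' = true) <
              Real.exp (-β * k) := by
  classical
  refine ⟨1/8, by norm_num, ?_⟩
  intro n d hd hlt k hk v hdv e e'
  set S : ℝ := ∑ u, (d u : ℝ) with hSdef
  have hS : 0 < S := Finset.sum_pos (fun u _ => by exact_mod_cast hd u) ⟨v, Finset.mem_univ v⟩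
  have h0 : ∀ f : EdgeIdx n, 0 < CLAux.clp d f := by
    intro f
    rw [CLAux.clp, ← hSdef]
    have ha := hd f.1.1
    have hb := hd f.1.2
    have ha' : (0:ℝ) < (d f.1.1 : ℝ) := by exact_mod_cast ha
    have hb' : (0:ℝ) < (d f.1.2 : ℝ) := by exact_mod_cast hb
    exact div_pos (mul_pos ha' hb') hS
  have h0' : ∀ f : EdgeIdx n, 0 ≤ CLAux.clp d f := fun f => (h0 f).le
  have hp1 : ∀ f : EdgeIdx n, CLAux.clp d f ≤ 1 := by
    intro f
    have h1 := hlt f.1.1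
    have h2 := hlt f.1.2
    have hd1 : (0:ℝ) ≤ (d f.1.1 : ℝ) := Nat.cast_nonneg _
    have hd2 : (0:ℝ) ≤ (d f.1.2 : ℝ) := Nat.cast_nonneg _
    have hsq : Real.sqrt (S/2) * Real.sqrt (S/2) = S/2 :=
      Real.mul_self_sqrt (by linarith)
    have hm := mul_lt_mul'' h1 h2 hd1 hd2
    have hprod : (d f.1.1 : ℝ) * (d f.1.2 : ℝ) < S / 8 := by
      calc (d f.1.1:ℝ) * (d f.1.2:ℝ) < (Real.sqrt (S/2)/2) * (Real.sqrt (S/2)/2) := hm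
        _ = (Real.sqrt (S/2) * Real.sqrt (S/2)) / 4 := by ring
        _ = (S/2)/4 := by rw [hsq]
        _ = S/8 := by ring
    rw [CLAux.clp, ← hSdef, div_le_one hS]
    linarith
  set E : (EdgeIdx n → Bool) → Prop := fun ω => ω e = true ∧ ω e' = true with hE
  set U₀ : Finset (EdgeIdx n) := {e, e'} with hU₀
  have hU₀card : U₀.card ≤ 2 := by
    rw [hU₀]
    refine le_trans (Finset.card_insert_le _ _) ?_
    rw [Finset.card_singleton]
  have hq : clProb d E = ∏ f ∈ U₀, CLAux.clp d f := by
    rw [CLAux.clProb_congr d (A := E) (B := fun ω => ∀ f ∈ U₀, ω f = true) ?_,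
      CLAux.clProb_cyl]
    intro ω
    constructor
    · rintro ⟨ha, hb⟩ f hf
      rw [hU₀] at hf
      rcases Finset.mem_insert.mp hf with rfl | hf
      · exact ha
      · rw [Finset.mem_singleton.mp hf]; exact hb
    · intro h
      exact ⟨h e (by simp [hU₀]), h e' (by simp [hU₀])⟩
  have hqpos : 0 < ∏ f ∈ U₀, CLAux.clp d f := Finset.prod_pos fun f _ => h0 f
  set Inc := Finset.univ.filter (fun f : EdgeIdx n => f.1.1 = v ∨ f.1.2 = v) with hInc
  set F := Inc \ U₀ with hF
  set j := 3 * k - 1 with hjdef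
  set 𝒯 := F.powersetCard j with h𝒯
  have hstep2 : clProb d (fun ω => 3*k < clDeg ω v ∧ E ω)
      ≤ ∑ T ∈ 𝒯, clProb d (fun ω => (∀ f ∈ T, ω f = true) ∧ E ω) := by
    refine le_trans (CLAux.clProb_mono d h0' hp1 (B := fun ω => ∃ T ∈ 𝒯,
        ((∀ f ∈ T, ω f = true) ∧ E ω)) ?_) (CLAux.clProb_union_le d h0' hp1 𝒯 _)
    rintro ω ⟨hA, hEω⟩
    obtain ⟨T, hT, hTall⟩ := CLAux.exists_bucket ω v k hA U₀ hU₀card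
    exact ⟨T, hT, hTall, hEω⟩
  have hTeval : ∀ T ∈ 𝒯, clProb d (fun ω => (∀ f ∈ T, ω f = true) ∧ E ω)
      = (∏ f ∈ T, CLAux.clp d f) * ∏ f ∈ U₀, CLAux.clp d f := by
    intro T hT
    have hTF : T ⊆ F := (Finset.mem_powersetCard.mp hT).1
    have hdisj : Disjoint T U₀ := by
      rw [Finset.disjoint_left]
      intro f hf hf'
      have hmem := hTF hf
      rw [hF, Finset.mem_sdiff] at hmem
      exact hmem.2 hf'
    have hcongr : clProb d (fun ω => (∀ f ∈ T, ω f = true) ∧ E ω)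
        = clProb d (fun ω => ∀ f ∈ T ∪ U₀, ω f = true) := by
      apply CLAux.clProb_congr
      intro ω
      constructor
      · rintro ⟨hTa, he1, he2⟩ f hf
        rcases Finset.mem_union.mp hf with hf | hf
        · exact hTa f hf
        · rw [hU₀] at hf
          rcases Finset.mem_insert.mp hf with rfl | hf
          · exact he1
          · rw [Finset.mem_singleton.mp hf]; exact he2
      · intro h
        exact ⟨fun f hf => h f (Finset.mem_union_left _ hf),
          h e (Finset.mem_union_right _ (by simp [hU₀])),
          h e' (Finset.mem_union_right _ (by simp [hU₀]))⟩
    rw [hcongr, CLAux.clProb_cyl, Finset.prod_union hdisj]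
  have hbound : clProb d (fun ω => 3*k < clDeg ω v ∧ E ω)
      ≤ (∑ T ∈ 𝒯, ∏ f ∈ T, CLAux.clp d f) * ∏ f ∈ U₀, CLAux.clp d f := by
    rw [Finset.sum_mul]
    exact hstep2.trans (le_of_eq (Finset.sum_congr rfl hTeval))
  have hmu : ∑ f ∈ F, CLAux.clp d f ≤ (k:ℝ) := by
    have h1 : ∑ f ∈ F, CLAux.clp d f ≤ ∑ f ∈ Inc, CLAux.clp d f := by
      refine Finset.sum_le_sum_of_subset_of_nonneg ?_ fun f _ _ => h0' f
      rw [hF]; exact Finset.sdiff_subset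
    have h2 := CLAux.sum_clp_incident d hS v
    rw [← hInc] at h2
    have h3 : (d v:ℝ) ≤ (k:ℝ) := by exact_mod_cast hdv
    linarith
  have hmu0 : 0 ≤ ∑ f ∈ F, CLAux.clp d f := Finset.sum_nonneg fun f _ => h0' f
  have hesymm := esymm_le (CLAux.clp d) F (fun f _ => h0' f) j
  have hjfac : (0:ℝ) < (j.factorial : ℝ) := by exact_mod_cast j.factorial_pos
  have hpow : (∑ f ∈ F, CLAux.clp d f) ^ j ≤ (k:ℝ) ^ j := pow_le_pow_left₀ hmu0 hmu j
  have hesum : ∑ T ∈ 𝒯, ∏ f ∈ T, CLAux.clp d f ≤ (k:ℝ) ^ j / (j.factorial:ℝ) := by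
    rw [le_div_iff₀ hjfac]
    calc (∑ T ∈ 𝒯, ∏ f ∈ T, CLAux.clp d f) * (j.factorial:ℝ)
        = (j.factorial:ℝ) * ∑ T ∈ 𝒯, ∏ f ∈ T, CLAux.clp d f := by ring
      _ ≤ (∑ f ∈ F, CLAux.clp d f) ^ j := hesymm
      _ ≤ (k:ℝ) ^ j := hpow
  have hnum := tail_num k hk
  rw [← hjdef] at hnum
  simp only [clCondProb]
  rw [hq]
  calc clProb d (fun ω => 3 * k < clDeg ω v ∧ E ω) / (∏ f ∈ U₀, CLAux.clp d f)
      ≤ ((∑ T ∈ 𝒯, ∏ f ∈ T, CLAux.clp d f) * ∏ f ∈ U₀, CLAux.clp d f)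
          / (∏ f ∈ U₀, CLAux.clp d f) := by
        exact (div_le_div_iff_of_pos_right hqpos).mpr hbound
    _ = ∑ T ∈ 𝒯, ∏ f ∈ T, CLAux.clp d f := by
        field_simp
    _ ≤ (k:ℝ) ^ j / (j.factorial:ℝ) := hesum
    _ < Real.exp (-(1/8) * k) := hnum
end
end

section
/- There is a constant β > 0 (one may take β = 1/36) such that the following holds. Let G be drawn from the Chung–Lu model G(d), let v be a vertex with d_v ≥ 4, let e, e′ be two vertex pairs, and let E be the event that both e and e′ are edges of G. Then P[D_v < d_v/3 | E] < exp(−β d_v). -/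
open Finset

noncomputable section
attribute [local instance] Classical.propDecidable

namespace CLaux

/-- per-edge weight -/
def W {n : ℕ} (d : Fin n → ℕ) (f : EdgeIdx n) (b : Bool) : ℝ :=
  if b then (d f.1.1 : ℝ) * (d f.1.2 : ℝ) / (∑ v, (d v : ℝ))
  else 1 - (d f.1.1 : ℝ) * (d f.1.2 : ℝ) / (∑ v, (d v : ℝ))

lemma clPr_eq {n : ℕ} (d : Fin n → ℕ) (ω : EdgeIdx n → Bool) :
    clPr d ω = ∏ f : EdgeIdx n, W d f (ω f) := by
  unfold clPr W
  refine Finset.prod_congr rfl fun f _ => ?_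
  cases h : ω f <;> simp [h]

lemma cl_sum_prod {n : ℕ} (d : Fin n → ℕ) (g : EdgeIdx n → Bool → ℝ) :
    ∑ ω : EdgeIdx n → Bool, clPr d ω * ∏ f, g f (ω f)
      = ∏ f : EdgeIdx n, (W d f true * g f true + W d f false * g f false) := by
  have h1 : ∀ ω : EdgeIdx n → Bool,
      clPr d ω * ∏ f, g f (ω f) = ∏ f, W d f (ω f) * g f (ω f) := by
    intro ω; rw [clPr_eq, ← Finset.prod_mul_distrib]
  simp_rw [h1]
  rw [← Fintype.prod_sum (fun f b => W d f b * g f b)]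
  refine Finset.prod_congr rfl fun f _ => ?_
  rw [Fintype.sum_bool]

lemma W_true {n : ℕ} (d : Fin n → ℕ) (f : EdgeIdx n) :
    W d f true = (d f.1.1 : ℝ) * (d f.1.2 : ℝ) / (∑ v, (d v : ℝ)) := by simp [W]

lemma W_false {n : ℕ} (d : Fin n → ℕ) (f : EdgeIdx n) :
    W d f false = 1 - (d f.1.1 : ℝ) * (d f.1.2 : ℝ) / (∑ v, (d v : ℝ)) := by simp [W]

lemma clProb_eq_sum {n : ℕ} (d : Fin n → ℕ) (P : (EdgeIdx n → Bool) → Prop)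
    (gg : (EdgeIdx n → Bool) → ℝ)
    (h1 : ∀ ω, P ω → clPr d ω = gg ω) (h2 : ∀ ω, ¬ P ω → gg ω = 0) :
    clProb d P = ∑ ω : EdgeIdx n → Bool, gg ω := by
  unfold clProb
  rw [Finset.sum_filter]
  refine Finset.sum_congr rfl fun ω _ => ?_
  by_cases hP : P ω
  · rw [if_pos hP]; exact h1 ω hP
  · rw [if_neg hP, h2 ω hP]

lemma clProb_le_sum {n : ℕ} (d : Fin n → ℕ) (P : (EdgeIdx n → Bool) → Prop)
    (gg : (EdgeIdx n → Bool) → ℝ)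
    (h1 : ∀ ω, P ω → clPr d ω ≤ gg ω) (h2 : ∀ ω, 0 ≤ gg ω) :
    clProb d P ≤ ∑ ω : EdgeIdx n → Bool, gg ω := by
  unfold clProb
  rw [Finset.sum_filter]
  refine Finset.sum_le_sum fun ω _ => ?_
  by_cases hP : P ω
  · rw [if_pos hP]; exact h1 ω hP
  · rw [if_neg hP]; exact h2 ω

variable {n : ℕ}

/-- the edge index of the pair {u,v}, with junk value `e₀` if u = v -/
def pidx (e₀ : EdgeIdx n) (v u : Fin n) : EdgeIdx n :=
  if h : u < v then ⟨(u, v), h⟩ else if h' : v < u then ⟨(v, u), h'⟩ else e₀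

lemma pidx_endpoints (e₀ : EdgeIdx n) (v u : Fin n) (h : u ≠ v) :
    (pidx e₀ v u).1 = (u, v) ∨ (pidx e₀ v u).1 = (v, u) := by
  rcases lt_or_gt_of_ne h with h1 | h1
  · left; simp [pidx, h1]
  · right; simp [pidx, h1, not_lt_of_gt h1]

lemma clAdj_iff (e₀ : EdgeIdx n) (ω : EdgeIdx n → Bool) (v u : Fin n) (h : u ≠ v) :
    clAdj ω u v ↔ ω (pidx e₀ v u) = true := by
  constructor
  · rintro ⟨f, hf, hor⟩
    have hfp : f = pidx e₀ v u := by
      rcases hor with ⟨h1, h2⟩ | ⟨h1, h2⟩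
      · have huv : u < v := by rw [← h1, ← h2]; exact f.2
        have : f.1 = (u, v) := Prod.ext h1 h2
        apply Subtype.ext; rw [this, pidx, dif_pos huv]
      · have huv : v < u := by rw [← h1, ← h2]; exact f.2
        have : f.1 = (v, u) := Prod.ext h1 h2
        apply Subtype.ext
        rw [this, pidx, dif_neg (by exact fun hc => absurd (hc.trans huv) (lt_irrefl u)),
          dif_pos huv]
    rwa [← hfp]
  · intro hw
    refine ⟨pidx e₀ v u, hw, ?_⟩
    rcases pidx_endpoints e₀ v u h with h1 | h1 <;> rw [h1] <;> simp

lemma pidx_injOn (e₀ : EdgeIdx n) (v : Fin n) :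
    Set.InjOn (pidx e₀ v) {u | u ≠ v} := by
  intro a ha b hb hab
  rcases lt_or_gt_of_ne (ha : a ≠ v) with h1 | h1 <;>
    rcases lt_or_gt_of_ne (hb : b ≠ v) with h2 | h2
  · have := congrArg (fun f : EdgeIdx n => f.1.1) hab
    simpa [pidx, h1, h2] using this
  · exfalso
    have := congrArg (fun f : EdgeIdx n => f.1.1) hab
    simp [pidx, h1, h2, not_lt_of_gt h2] at this
    exact absurd (this ▸ h1) (lt_irrefl v)
  · exfalso
    have := congrArg (fun f : EdgeIdx n => f.1.1) hab
    simp [pidx, h1, h2, not_lt_of_gt h1] at this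
    exact absurd (this ▸ h2) (lt_irrefl v)
  · have := congrArg (fun f : EdgeIdx n => f.1.2) hab
    simpa [pidx, h1, h2, not_lt_of_gt h1, not_lt_of_gt h2] using this

lemma clDeg_eq (e₀ : EdgeIdx n) (ω : EdgeIdx n → Bool) (v : Fin n) :
    clDeg ω v = ((Finset.univ.erase v).filter fun u => ω (pidx e₀ v u) = true).card := by
  unfold clDeg
  congr 1
  ext u
  by_cases h : u = v
  · subst h
    simp only [Finset.mem_filter, Finset.mem_univ, true_and, Finset.mem_erase]
    constructor
    · rintro ⟨f, _, ⟨h1, h2⟩ | ⟨h1, h2⟩⟩ <;>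
        · have := f.2; rw [h1, h2] at this; exact absurd this (lt_irrefl u)
    · rintro ⟨h1, _⟩; exact absurd rfl h1.1
  · simp only [Finset.mem_filter, Finset.mem_univ, true_and, Finset.mem_erase, h,
      not_false_iff]
    rw [clAdj_iff e₀ ω v u h]
    tauto

end CLaux

open CLaux in
set_option maxHeartbeats 3200000 in
/-- There is a constant `β > 0` (one may take `β = 1/36`) such that over
the Chung–Lu model `G(d)`: for every vertex `v` with `d_v ≥ 4` and vertex pairs `e, e'`,
conditioning on the event `E` that both `e` and `e'` are edges,
`P[D_v < d_v / 3 | E] < exp(-β d_v)`. -/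
theorem chungLu_degree_lower_tail :
    ∃ β : ℝ, 0 < β ∧
      ∀ (n : ℕ) (d : Fin n → ℕ),
        (∀ v, 0 < d v) →
        (∀ v, (d v : ℝ) < Real.sqrt ((∑ u, (d u : ℝ)) / 2) / 2) →
        ∀ v : Fin n, 4 ≤ d v →
          ∀ e e' : EdgeIdx n,
            clCondProb d (fun ω => (clDeg ω v : ℝ) < (d v : ℝ) / 3)
                (fun ω => ω e = true ∧ ω e' = true) <
              Real.exp (-β * d v) := by
  refine ⟨1/36, by norm_num, ?_⟩
  intro n d hd hmax v hv e e'
  set S : ℝ := ∑ u, (d u : ℝ) with hSdef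
  set r : ℝ := Real.sqrt (S / 2) with hrdef
  have hS0 : 0 < S := Finset.sum_pos (fun u _ => by exact_mod_cast hd u) ⟨v, Finset.mem_univ v⟩
  have hrr : r * r = S / 2 := Real.mul_self_sqrt (by linarith)
  have hdv4 : (4 : ℝ) ≤ (d v : ℝ) := by exact_mod_cast hv
  have hr8 : 8 < r := by have := hmax v; nlinarith
  have hS128 : 128 < S := by nlinarith
  -- edge probabilities
  set p : EdgeIdx n → ℝ := fun f => (d f.1.1 : ℝ) * (d f.1.2 : ℝ) / S with hpdef
  have hWt : ∀ f : EdgeIdx n, W d f true = p f := fun f => W_true d f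
  have hWf : ∀ f : EdgeIdx n, W d f false = 1 - p f := fun f => W_false d f
  have hdpos : ∀ u : Fin n, (0 : ℝ) < (d u : ℝ) := fun u => by exact_mod_cast hd u
  have hp0 : ∀ f : EdgeIdx n, 0 < p f :=
    fun f => div_pos (mul_pos (hdpos _) (hdpos _)) hS0
  have hd32 : ∀ u : Fin n, 32 * (d u : ℝ) < S := by
    intro u
    have h1 := hmax u
    have h2 := (hdpos u).le
    nlinarith
  have hp8 : ∀ f : EdgeIdx n, p f < 1 / 8 := by
    intro f
    rw [hpdef, div_lt_iff₀ hS0]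
    have h1 := hmax f.1.1
    have h2 := hmax f.1.2
    have h3 := (hdpos f.1.1).le
    have h4 := (hdpos f.1.2).le
    nlinarith
  have hclPr_nonneg : ∀ ω : EdgeIdx n → Bool, 0 ≤ clPr d ω := by
    intro ω
    rw [clPr_eq]
    refine Finset.prod_nonneg fun f _ => ?_
    cases hb : ω f
    · rw [hWf]; have := hp8 f; linarith
    · rw [hWt]; exact (hp0 f).le
  -- the sets
  set T : Finset (EdgeIdx n) := {e, e'} with hTdef
  set U : Finset (Fin n) := Finset.univ.erase v with hUdef
  set ι : Fin n → EdgeIdx n := pidx e v with hιdef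
  have hinj : ∀ a ∈ U, ∀ b ∈ U, ι a = ι b → a = b := by
    intro a ha b hb hab
    exact pidx_injOn e v (Finset.ne_of_mem_erase ha) (Finset.ne_of_mem_erase hb) hab
  set VE : Finset (EdgeIdx n) := U.image ι with hVEdef
  have hpι : ∀ u ∈ U, p (ι u) = (d u : ℝ) * (d v : ℝ) / S := by
    intro u hu
    have hpe : p (ι u) = (d (ι u).1.1 : ℝ) * (d (ι u).1.2 : ℝ) / S := rfl
    rcases pidx_endpoints e v u (Finset.ne_of_mem_erase hu) with h1 | h1 <;>
      rw [hpe, h1]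
    show (d v : ℝ) * (d u : ℝ) / S = (d u : ℝ) * (d v : ℝ) / S
    ring
  have hpVE : ∀ f ∈ VE, p f ≤ (d v : ℝ) / 32 := by
    intro f hfv
    rcases Finset.mem_image.mp hfv with ⟨u, hu, rfl⟩
    rw [hpι u hu, div_le_div_iff₀ hS0 (by norm_num : (0:ℝ) < 32)]
    have := hd32 u
    nlinarith [hdpos u, hdpos v]
  -- indicator decompositions
  set gT : EdgeIdx n → Bool → ℝ := fun f b => if f ∈ T then (if b then 1 else 0) else 1
    with hgTdef
  set gV : EdgeIdx n → Bool → ℝ := fun f b => if f ∈ VE then (if b then 1/2 else 1) else 1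
    with hgVdef
  have hgT : ∀ ω : EdgeIdx n → Bool,
      (if (ω e = true ∧ ω e' = true) then (1:ℝ) else 0) = ∏ f, gT f (ω f) := by
    intro ω
    by_cases hE : ω e = true ∧ ω e' = true
    · rw [if_pos hE]
      symm
      refine Finset.prod_eq_one fun f _ => ?_
      rw [hgTdef]
      by_cases hfT : f ∈ T
      · have : f = e ∨ f = e' := by simpa [hTdef] using hfT
        rcases this with rfl | rfl <;> simp [hfT, hE.1, hE.2]
      · simp [hfT]
    · rw [if_neg hE]
      symm
      rcases not_and_or.mp hE with h | h
      · refine Finset.prod_eq_zero (Finset.mem_univ e) ?_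
        rw [hgTdef]
        simp [hTdef, h]
      · refine Finset.prod_eq_zero (Finset.mem_univ e') ?_
        rw [hgTdef]
        simp [hTdef, h]
  have hgV : ∀ ω : EdgeIdx n → Bool,
      ∏ f, gV f (ω f) = (1/2 : ℝ) ^ (clDeg ω v) := by
    intro ω
    rw [hgVdef]
    simp only [Finset.prod_ite_mem, Finset.univ_inter, hVEdef]
    rw [Finset.prod_image hinj, Finset.prod_ite, Finset.prod_const, Finset.prod_const,
      one_pow, mul_one, clDeg_eq e ω v]
  -- denominator
  have hD : clProb d (fun ω => ω e = true ∧ ω e' = true) = ∏ f ∈ T, p f := by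
    rw [clProb_eq_sum d (fun ω => ω e = true ∧ ω e' = true)
      (fun ω => clPr d ω * ∏ f, gT f (ω f))
      (fun ω hP => by
        show clPr d ω = clPr d ω * ∏ f, gT f (ω f)
        rw [← hgT ω, if_pos hP, mul_one])
      (fun ω hP => by
        show clPr d ω * ∏ f, gT f (ω f) = 0
        rw [← hgT ω, if_neg hP, mul_zero])]
    rw [cl_sum_prod d gT]
    have h2 : ∀ f : EdgeIdx n,
        W d f true * gT f true + W d f false * gT f false = if f ∈ T then p f else 1 := by
      intro f
      rw [hWt, hWf, hgTdef]
      by_cases hfT : f ∈ T <;> simp [hfT]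
    rw [Finset.prod_congr rfl fun f _ => h2 f, Finset.prod_ite_mem, Finset.univ_inter]
  have hD0 : 0 < clProb d (fun ω => ω e = true ∧ ω e' = true) := by
    rw [hD]; exact Finset.prod_pos fun f _ => hp0 f
  -- numerator
  set t3 : ℝ := (2:ℝ) ^ ((d v : ℝ) / 3) with ht3def
  have ht30 : 0 < t3 := Real.rpow_pos_of_pos (by norm_num) _
  set g : EdgeIdx n → Bool → ℝ := fun f b => gT f b * gV f b with hgdef
  have hgnn : ∀ (f : EdgeIdx n) (b : Bool), 0 ≤ g f b := by
    intro f b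
    rw [hgdef, hgTdef, hgVdef]
    dsimp only
    split_ifs <;> norm_num
  have hkey2 : ∀ ω : EdgeIdx n → Bool, 0 ≤ t3 * (clPr d ω * ∏ f, g f (ω f)) := by
    intro ω
    have h0 : 0 ≤ ∏ f, g f (ω f) := Finset.prod_nonneg fun f _ => hgnn f (ω f)
    exact mul_nonneg ht30.le (mul_nonneg (hclPr_nonneg ω) h0)
  have hkey : ∀ ω : EdgeIdx n → Bool,
      ((clDeg ω v : ℝ) < (d v : ℝ) / 3 ∧ (ω e = true ∧ ω e' = true)) →
        clPr d ω ≤ t3 * (clPr d ω * ∏ f, g f (ω f)) := by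
    intro ω hAE
    · have hprodg : ∏ f, g f (ω f) = (1/2 : ℝ) ^ (clDeg ω v) := by
        rw [hgdef]
        dsimp only
        rw [Finset.prod_mul_distrib, ← hgT ω, if_pos hAE.2, one_mul, hgV ω]
      rw [hprodg]
      have hhalf : (1/2 : ℝ) ^ (clDeg ω v) = (2:ℝ) ^ (-(clDeg ω v : ℝ)) := by
        rw [one_div, inv_pow, ← Real.rpow_natCast (2:ℝ) (clDeg ω v),
          ← Real.rpow_neg (by norm_num : (0:ℝ) ≤ 2)]
      have h1 : 1 ≤ t3 * (1/2 : ℝ) ^ (clDeg ω v) := by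
        rw [hhalf, ht3def, ← Real.rpow_add (by norm_num : (0:ℝ) < 2)]
        have h0 : (1:ℝ) = (2:ℝ) ^ (0:ℝ) := (Real.rpow_zero 2).symm
        rw [h0]
        apply Real.rpow_le_rpow_of_exponent_le (by norm_num)
        have := hAE.1
        linarith
      calc clPr d ω = clPr d ω * 1 := (mul_one _).symm
        _ ≤ clPr d ω * (t3 * (1/2 : ℝ) ^ (clDeg ω v)) :=
            mul_le_mul_of_nonneg_left h1 (hclPr_nonneg ω)
        _ = t3 * (clPr d ω * (1/2 : ℝ) ^ (clDeg ω v)) := by ring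
  have hN : clProb d (fun ω => ((clDeg ω v : ℝ) < (d v : ℝ) / 3 ∧ (ω e = true ∧ ω e' = true)))
      ≤ t3 * ∏ f : EdgeIdx n, (W d f true * g f true + W d f false * g f false) := by
    rw [← cl_sum_prod d g, Finset.mul_sum]
    exact clProb_le_sum d _ _ hkey hkey2
  -- per-edge bound on the product
  have hval_nn : ∀ f : EdgeIdx n, 0 ≤ W d f true * g f true + W d f false * g f false := by
    intro f
    have h1 := hp0 f
    have h2 := hp8 f
    have := hgnn f true
    have := hgnn f false
    rw [hWt, hWf]
    nlinarith
  have hval : ∀ f : EdgeIdx n,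
      W d f true * g f true + W d f false * g f false
        ≤ (if f ∈ T then p f else 1) * (if f ∈ VE \ T then 1 - p f / 2 else 1) := by
    intro f
    have h1 := hp0 f
    have h2 := hp8 f
    rw [hWt, hWf, hgdef, hgTdef, hgVdef]
    dsimp only
    by_cases hfT : f ∈ T <;> by_cases hfV : f ∈ VE <;>
      simp [hfT, hfV, Finset.mem_sdiff] <;> nlinarith
  have hprod_le : ∏ f : EdgeIdx n, (W d f true * g f true + W d f false * g f false)
      ≤ (∏ f ∈ T, p f) * ∏ f ∈ VE \ T, (1 - p f / 2) := by
    calc ∏ f : EdgeIdx n, (W d f true * g f true + W d f false * g f false)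
        ≤ ∏ f : EdgeIdx n,
            ((if f ∈ T then p f else 1) * (if f ∈ VE \ T then 1 - p f / 2 else 1)) :=
          Finset.prod_le_prod (fun f _ => hval_nn f) (fun f _ => hval f)
      _ = (∏ f ∈ T, p f) * ∏ f ∈ VE \ T, (1 - p f / 2) := by
          rw [Finset.prod_mul_distrib, Finset.prod_ite_mem, Finset.prod_ite_mem,
            Finset.univ_inter, Finset.univ_inter]
  -- exponential bound on the product over VE \ T
  have hexp : ∏ f ∈ VE \ T, (1 - p f / 2) ≤ Real.exp (∑ f ∈ VE \ T, -(p f / 2)) := by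
    rw [Real.exp_sum]
    refine Finset.prod_le_prod (fun f _ => by nlinarith [hp8 f, hp0 f]) (fun f _ => ?_)
    have := Real.add_one_le_exp (-(p f / 2))
    linarith
  -- lower bound on the sum of probabilities
  have hUsum : ∑ u ∈ U, (d u : ℝ) = S - (d v : ℝ) := by
    have h := Finset.sum_erase_add Finset.univ (fun u => (d u : ℝ)) (Finset.mem_univ v)
    rw [hUdef]
    linarith [h]
  have hVEsum : ∑ f ∈ VE, p f = (S - (d v : ℝ)) * ((d v : ℝ) / S) := by
    rw [hVEdef, Finset.sum_image hinj, Finset.sum_congr rfl hpι]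
    simp_rw [mul_div_assoc]
    rw [← Finset.sum_mul, hUsum]
  have hcardT : ((VE ∩ T).card : ℝ) ≤ 2 := by
    have h1 : (VE ∩ T).card ≤ T.card := Finset.card_le_card Finset.inter_subset_right
    have h2 : T.card ≤ 2 := by
      rw [hTdef]
      exact (Finset.card_insert_le e {e'}).trans (by simp)
    exact_mod_cast h1.trans h2
  have hinterT : ∑ f ∈ VE ∩ T, p f ≤ (d v : ℝ) / 16 := by
    calc ∑ f ∈ VE ∩ T, p f ≤ ∑ _f ∈ VE ∩ T, (d v : ℝ) / 32 :=
        Finset.sum_le_sum fun f hf => hpVE f (Finset.mem_of_mem_inter_left hf)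
      _ = ((VE ∩ T).card : ℝ) * ((d v : ℝ) / 32) := by rw [Finset.sum_const, nsmul_eq_mul]
      _ ≤ 2 * ((d v : ℝ) / 32) := by nlinarith [hcardT, hdv4]
      _ = (d v : ℝ) / 16 := by ring
  have hsdiff : ∑ f ∈ VE \ T, p f + ∑ f ∈ VE ∩ T, p f = ∑ f ∈ VE, p f := by
    rw [← Finset.sdiff_inter_self_left VE T]
    exact Finset.sum_sdiff Finset.inter_subset_left
  have hsum29 : (29/32) * (d v : ℝ) ≤ ∑ f ∈ VE \ T, p f := by
    have hkey31 : (31/32) * (d v : ℝ) ≤ (S - (d v : ℝ)) * ((d v : ℝ) / S) := by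
      have hrw : (S - (d v : ℝ)) * ((d v : ℝ) / S) = ((S - (d v : ℝ)) * (d v : ℝ)) / S := by
        ring
      rw [hrw, le_div_iff₀ hS0]
      nlinarith [mul_nonneg (show (0:ℝ) ≤ (d v : ℝ) by linarith)
        (show (0:ℝ) ≤ S - 32 * (d v : ℝ) by linarith [hd32 v])]
    linarith [hinterT, hsdiff, hVEsum, hkey31]
  have hEsum : Real.exp (∑ f ∈ VE \ T, -(p f / 2)) ≤ Real.exp (-(29/64) * (d v : ℝ)) := by
    apply Real.exp_le_exp.mpr
    have h1 : ∑ f ∈ VE \ T, -(p f / 2) = -((∑ f ∈ VE \ T, p f) / 2) := by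
      rw [Finset.sum_neg_distrib, Finset.sum_div]
    rw [h1]
    linarith [hsum29]
  have hQ : ∏ f ∈ VE \ T, (1 - p f / 2) ≤ Real.exp (-(29/64) * (d v : ℝ)) :=
    hexp.trans hEsum
  have hDT0 : 0 < ∏ f ∈ T, p f := Finset.prod_pos fun f _ => hp0 f
  have hfinal : clProb d
        (fun ω => ((clDeg ω v : ℝ) < (d v : ℝ) / 3 ∧ (ω e = true ∧ ω e' = true)))
      ≤ (t3 * Real.exp (-(29/64) * (d v : ℝ))) *
          clProb d (fun ω => ω e = true ∧ ω e' = true) := by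
    calc clProb d (fun ω => ((clDeg ω v : ℝ) < (d v : ℝ) / 3 ∧ (ω e = true ∧ ω e' = true)))
        ≤ t3 * ∏ f : EdgeIdx n, (W d f true * g f true + W d f false * g f false) := hN
      _ ≤ t3 * ((∏ f ∈ T, p f) * ∏ f ∈ VE \ T, (1 - p f / 2)) :=
          mul_le_mul_of_nonneg_left hprod_le ht30.le
      _ ≤ t3 * ((∏ f ∈ T, p f) * Real.exp (-(29/64) * (d v : ℝ))) :=
          mul_le_mul_of_nonneg_left (mul_le_mul_of_nonneg_left hQ hDT0.le) ht30.le
      _ = (t3 * Real.exp (-(29/64) * (d v : ℝ))) *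
            clProb d (fun ω => ω e = true ∧ ω e' = true) := by rw [hD]; ring
  have hbd : t3 * Real.exp (-(29/64) * (d v : ℝ)) < Real.exp (-(1/36) * (d v : ℝ)) := by
    rw [ht3def, Real.rpow_def_of_pos (by norm_num : (0:ℝ) < 2), ← Real.exp_add]
    apply Real.exp_lt_exp.mpr
    have hlog := Real.log_two_lt_d9
    have hx : Real.log 2 * ((d v : ℝ) / 3) ≤ 0.6931471808 * ((d v : ℝ) / 3) :=
      mul_le_mul_of_nonneg_right hlog.le (by linarith)
    nlinarith [hx, hdv4]
  show clCondProb d _ _ < _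
  unfold clCondProb
  rw [div_lt_iff₀ hD0]
  calc clProb d (fun ω => ((clDeg ω v : ℝ) < (d v : ℝ) / 3 ∧ (ω e = true ∧ ω e' = true)))
      ≤ (t3 * Real.exp (-(29/64) * (d v : ℝ))) *
          clProb d (fun ω => ω e = true ∧ ω e' = true) := hfinal
    _ < Real.exp (-(1/36) * (d v : ℝ)) * clProb d (fun ω => ω e = true ∧ ω e' = true) :=
        mul_lt_mul_of_pos_right hbd hD0
end
end

section
/- There is a constant β > 0 such that the following holds. Let G be drawn from the Chung–Lu model G(d) with MinBucket buckets formed. For any three distinct vertices v, w, w′ (w ≠ w′) with d_v ≥ 4 and d_w ≤ d_v/10, one has E[Y_{v,w}·Y_{v,w′}] ≤ 2·exp(−β d_v)·d_v²·d_w·d_{w′}/(4m²). -/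
open Finset

noncomputable section
attribute [local instance] Classical.propDecidable

namespace ChungLuAux
variable {n : ℕ}

def eIdx (u v : Fin n) (h : u ≠ v) : EdgeIdx n :=
  if h' : u < v then ⟨(u, v), h'⟩
  else ⟨(v, u), lt_of_le_of_ne (not_lt.mp h') (Ne.symm h)⟩

lemma eIdx_spec (u v : Fin n) (h : u ≠ v) :
    ((eIdx u v h).1.1 = u ∧ (eIdx u v h).1.2 = v) ∨
    ((eIdx u v h).1.1 = v ∧ (eIdx u v h).1.2 = u) := by
  unfold eIdx; split <;> simp

lemma eIdx_unique (u v : Fin n) (h : u ≠ v) (e : EdgeIdx n)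
    (he : (e.1.1 = u ∧ e.1.2 = v) ∨ (e.1.1 = v ∧ e.1.2 = u)) : e = eIdx u v h := by
  obtain ⟨⟨a, b⟩, hab⟩ := e
  unfold eIdx
  rcases he with ⟨h1, h2⟩ | ⟨h1, h2⟩
  · simp only at h1 h2
    subst h1; subst h2
    rw [dif_pos hab]
  · simp only at h1 h2
    subst h1; subst h2
    rw [dif_neg (not_lt.mpr (le_of_lt hab))]

lemma clAdj_iff (ω : EdgeIdx n → Bool) (u v : Fin n) (h : u ≠ v) :
    clAdj ω u v ↔ ω (eIdx u v h) = true := by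
  constructor
  · rintro ⟨e, hω, he⟩
    rwa [← eIdx_unique u v h e he]
  · intro hω
    exact ⟨eIdx u v h, hω, eIdx_spec u v h⟩

lemma clAdj_ne {ω : EdgeIdx n → Bool} {u v : Fin n} (h : clAdj ω u v) : u ≠ v := by
  obtain ⟨e, -, he⟩ := h
  rintro rfl
  rcases he with ⟨h1, h2⟩ | ⟨h1, h2⟩ <;>
    exact absurd e.2 (by rw [h1, h2]; exact lt_irrefl u)

lemma eIdx_right_inj {u v v' : Fin n} (h : u ≠ v) (h' : u ≠ v')
    (he : eIdx u v h = eIdx u v' h') : v = v' := by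
  rcases eIdx_spec u v h with ⟨h1, h2⟩ | ⟨h1, h2⟩ <;>
    rcases eIdx_spec u v' h' with ⟨g1, g2⟩ | ⟨g1, g2⟩ <;> rw [he] at h1 h2
  · exact (h2.symm.trans g2).symm ▸ rfl
  · exact absurd (g2.symm.trans h2) h
  · exact absurd (g1.symm.trans h1).symm (Ne.symm h)
  · exact h1.symm.trans g1

lemma eIdx_comm (u v : Fin n) (h : u ≠ v) : eIdx u v h = eIdx v u h.symm := by
  apply eIdx_unique
  rcases eIdx_spec u v h with ⟨h1, h2⟩ | ⟨h1, h2⟩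
  · exact Or.inr ⟨h1, h2⟩
  · exact Or.inl ⟨h1, h2⟩

lemma touch_touch_eq {u v : Fin n} (h : u ≠ v) {e : EdgeIdx n}
    (hu : e.1.1 = u ∨ e.1.2 = u) (hv : e.1.1 = v ∨ e.1.2 = v) : e = eIdx u v h := by
  apply eIdx_unique
  rcases hu with h1 | h1 <;> rcases hv with h2 | h2
  · exact absurd (h1.symm.trans h2) h
  · exact Or.inl ⟨h1, h2⟩
  · exact Or.inr ⟨h2, h1⟩
  · exact absurd (h1.symm.trans h2) h

lemma eIdx_touch_left (u v : Fin n) (h : u ≠ v) :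
    (eIdx u v h).1.1 = u ∨ (eIdx u v h).1.2 = u := by
  rcases eIdx_spec u v h with ⟨h1, h2⟩ | ⟨h1, h2⟩
  exacts [Or.inl h1, Or.inr h2]

lemma eIdx_touch_right (u v : Fin n) (h : u ≠ v) :
    (eIdx u v h).1.1 = v ∨ (eIdx u v h).1.2 = v := by
  rcases eIdx_spec u v h with ⟨h1, h2⟩ | ⟨h1, h2⟩
  exacts [Or.inr h2, Or.inl h1]

lemma clDeg_eq_card (ω : EdgeIdx n → Bool) (a : Fin n) :
    clDeg ω a =
      ((univ : Finset (EdgeIdx n)).filter fun e => (e.1.1 = a ∨ e.1.2 = a) ∧ ω e = true).card := by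
  unfold clDeg
  apply Finset.card_bij (fun u hu => eIdx u a (clAdj_ne (by simpa using hu)))
  · intro u hu
    have hadj : clAdj ω u a := by simpa using hu
    simp only [Finset.mem_filter, Finset.mem_univ, true_and]
    exact ⟨eIdx_touch_right u a _, (clAdj_iff ω u a _).mp hadj⟩
  · intro u₁ hu₁ u₂ hu₂ hee
    have h1 := (eIdx_comm u₁ a (clAdj_ne (by simpa using hu₁)))
    have h2 := (eIdx_comm u₂ a (clAdj_ne (by simpa using hu₂)))
    exact eIdx_right_inj _ _ (h1 ▸ h2 ▸ hee)
  · intro e he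
    simp only [Finset.mem_filter, Finset.mem_univ, true_and] at he
    obtain ⟨htouch, hω⟩ := he
    rcases htouch with h1 | h1
    · refine ⟨e.1.2, by simp only [Finset.mem_filter, Finset.mem_univ, true_and]; exact ⟨e, hω, Or.inr ⟨h1, rfl⟩⟩, ?_⟩
      exact (eIdx_unique _ _ _ e (Or.inr ⟨h1, rfl⟩)).symm
    · refine ⟨e.1.1, by simp only [Finset.mem_filter, Finset.mem_univ, true_and]; exact ⟨e, hω, Or.inl ⟨rfl, h1⟩⟩, ?_⟩
      exact (eIdx_unique _ _ _ e (Or.inl ⟨rfl, h1⟩)).symm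

end ChungLuAux

namespace ChungLuAux2
open ChungLuAux
variable {n : ℕ}

def gfun (v w w' : Fin n) (e : EdgeIdx n) (b : Bool) : ℝ :=
  if (e.1.1 = v ∨ e.1.2 = v) ∧ (e.1.1 = w ∨ e.1.2 = w ∨ e.1.1 = w' ∨ e.1.2 = w') then
    (if b then 1 else 0)
  else if e.1.1 = v ∨ e.1.2 = v then (if b then 2⁻¹ else 1)
  else if e.1.1 = w ∨ e.1.2 = w then (if b then 2 else 1)
  else 1

lemma gfun_nonneg (v w w' : Fin n) (e : EdgeIdx n) (b : Bool) : 0 ≤ gfun v w w' e b := by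
  unfold gfun; split_ifs <;> norm_num

lemma spec_iff {v w w' : Fin n} (hvw : v ≠ w) (hvw' : v ≠ w') (e : EdgeIdx n) :
    ((e.1.1 = v ∨ e.1.2 = v) ∧ (e.1.1 = w ∨ e.1.2 = w ∨ e.1.1 = w' ∨ e.1.2 = w')) ↔
      (e = eIdx v w hvw ∨ e = eIdx v w' hvw') := by
  constructor
  · rintro ⟨hv, hw⟩
    rcases hw with h | h | h | h
    · exact Or.inl (touch_touch_eq hvw hv (Or.inl h))
    · exact Or.inl (touch_touch_eq hvw hv (Or.inr h))
    · exact Or.inr (touch_touch_eq hvw' hv (Or.inl h))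
    · exact Or.inr (touch_touch_eq hvw' hv (Or.inr h))
  · rintro (rfl | rfl)
    · exact ⟨eIdx_touch_left v w hvw, by
        rcases eIdx_touch_right v w hvw with h | h
        exacts [Or.inl h, Or.inr (Or.inl h)]⟩
    · exact ⟨eIdx_touch_left v w' hvw', by
        rcases eIdx_touch_right v w' hvw' with h | h
        exacts [Or.inr (Or.inr (Or.inl h)), Or.inr (Or.inr (Or.inr h))]⟩

set_option maxHeartbeats 2000000 in
lemma pointwise (v w w' : Fin n) (hvw : v ≠ w) (hvw' : v ≠ w') (hww' : w ≠ w')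
    (ω : EdgeIdx n → Bool) :
    clY ω v w * clY ω v w' ≤ ∏ e : EdgeIdx n, gfun v w w' e (ω e) := by
  by_cases hb : clInBucket ω v w ∧ clInBucket ω v w'
  case neg =>
    have h0 : clY ω v w * clY ω v w' = 0 := by
      unfold clY
      rcases not_and_or.mp hb with h | h <;> simp [h]
    rw [h0]
    exact Finset.prod_nonneg fun e _ => gfun_nonneg v w w' e (ω e)
  case pos =>
    have hY : clY ω v w * clY ω v w' = 1 := by
      unfold clY; rw [if_pos hb.1, if_pos hb.2, one_mul]
    rw [hY]
    set E1 := eIdx v w hvw with hE1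
    set E2 := eIdx v w' hvw' with hE2
    have hE12 : E1 ≠ E2 := fun hh => hww' (eIdx_right_inj hvw hvw' hh)
    have hω1 : ω E1 = true := (clAdj_iff ω v w hvw).mp hb.1.1
    have hω2 : ω E2 = true := (clAdj_iff ω v w' hvw').mp hb.2.1
    set SA := (univ : Finset (EdgeIdx n)).filter
        (fun e => ¬(e = E1 ∨ e = E2) ∧ (e.1.1 = v ∨ e.1.2 = v) ∧ ω e = true) with hSA
    set SB := (univ : Finset (EdgeIdx n)).filter
        (fun e => ¬(e = E1 ∨ e = E2) ∧ ¬(e.1.1 = v ∨ e.1.2 = v) ∧ (e.1.1 = w ∨ e.1.2 = w) ∧ ω e = true) with hSB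
    have hDv : clDeg ω v = 2 + SA.card := by
      rw [clDeg_eq_card]
      have hset : (univ : Finset (EdgeIdx n)).filter (fun e => (e.1.1 = v ∨ e.1.2 = v) ∧ ω e = true)
          = insert E1 (insert E2 SA) := by
        ext e
        simp only [Finset.mem_filter, Finset.mem_univ, true_and, Finset.mem_insert, hSA]
        constructor
        · rintro ⟨htv, hωe⟩
          by_cases hs : e = E1 ∨ e = E2
          · rcases hs with h | h
            exacts [Or.inl h, Or.inr (Or.inl h)]
          · exact Or.inr (Or.inr ⟨hs, htv, hωe⟩)
        · rintro (rfl | rfl | ⟨-, htv, hωe⟩)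
          · exact ⟨eIdx_touch_left v w hvw, hω1⟩
          · exact ⟨eIdx_touch_left v w' hvw', hω2⟩
          · exact ⟨htv, hωe⟩
      have hm2 : E2 ∉ SA := by simp [hSA]
      have hm1 : E1 ∉ insert E2 SA := by simp [hSA, hE12]
      rw [hset, Finset.card_insert_of_notMem hm1, Finset.card_insert_of_notMem hm2]
      omega
    have hDw : clDeg ω w = 1 + SB.card := by
      rw [clDeg_eq_card]
      have hset : (univ : Finset (EdgeIdx n)).filter (fun e => (e.1.1 = w ∨ e.1.2 = w) ∧ ω e = true)
          = insert E1 SB := by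
        ext e
        simp only [Finset.mem_filter, Finset.mem_univ, true_and, Finset.mem_insert, hSB]
        constructor
        · rintro ⟨htw, hωe⟩
          by_cases htv : e.1.1 = v ∨ e.1.2 = v
          · exact Or.inl (touch_touch_eq hvw htv htw)
          · refine Or.inr ⟨?_, htv, htw, hωe⟩
            rintro (rfl | rfl)
            · exact htv (eIdx_touch_left v w hvw)
            · exact htv (eIdx_touch_left v w' hvw')
        · rintro (rfl | ⟨-, -, htw, hωe⟩)
          · exact ⟨eIdx_touch_right v w hvw, hω1⟩
          · exact ⟨htw, hωe⟩
      have hm : E1 ∉ SB := by simp [hSB]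
      rw [hset, Finset.card_insert_of_notMem hm]
      omega
    have hAB : SA.card ≤ SB.card := by
      have hle : clDeg ω v ≤ clDeg ω w := by
        rcases hb.1.2 with h | h
        exacts [le_of_lt h, le_of_eq h.1]
      rw [hDv, hDw] at hle; omega
    have hprod : ∏ e : EdgeIdx n, gfun v w w' e (ω e) = 2⁻¹ ^ SA.card * 2 ^ SB.card := by
      rw [← Finset.prod_filter_mul_prod_filter_not univ (fun e => e = E1 ∨ e = E2)
        (fun e => gfun v w w' e (ω e))]
      have hfil : (univ : Finset (EdgeIdx n)).filter (fun e => e = E1 ∨ e = E2) = {E1, E2} := by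
        ext e; simp
      have hpart1 : ∏ e ∈ (univ : Finset (EdgeIdx n)).filter (fun e => e = E1 ∨ e = E2),
          gfun v w w' e (ω e) = 1 := by
        rw [hfil, Finset.prod_pair hE12]
        have g1 : gfun v w w' E1 (ω E1) = 1 := by
          unfold gfun
          rw [if_pos ((spec_iff hvw hvw' E1).mpr (Or.inl hE1)), hω1]
          simp
        have g2 : gfun v w w' E2 (ω E2) = 1 := by
          unfold gfun
          rw [if_pos ((spec_iff hvw hvw' E2).mpr (Or.inr hE2)), hω2]
          simp
        rw [g1, g2, one_mul]
      have hpart2 : ∏ e ∈ (univ : Finset (EdgeIdx n)).filter (fun e => ¬(e = E1 ∨ e = E2)),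
          gfun v w w' e (ω e) = 2⁻¹ ^ SA.card * 2 ^ SB.card := by
        rw [← Finset.prod_filter_mul_prod_filter_not
          ((univ : Finset (EdgeIdx n)).filter (fun e => ¬(e = E1 ∨ e = E2)))
          (fun e => e.1.1 = v ∨ e.1.2 = v) (fun e => gfun v w w' e (ω e))]
        have hA : ∏ e ∈ ((univ : Finset (EdgeIdx n)).filter (fun e => ¬(e = E1 ∨ e = E2))).filter
            (fun e => e.1.1 = v ∨ e.1.2 = v), gfun v w w' e (ω e) = 2⁻¹ ^ SA.card := by
          rw [Finset.filter_filter]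
          have hcong : ∀ e ∈ (univ : Finset (EdgeIdx n)).filter
              (fun e => ¬(e = E1 ∨ e = E2) ∧ (e.1.1 = v ∨ e.1.2 = v)),
              gfun v w w' e (ω e) = if ω e = true then (2⁻¹ : ℝ) else 1 := by
            intro e he
            simp only [Finset.mem_filter, Finset.mem_univ, true_and] at he
            unfold gfun
            rw [if_neg (fun hc => he.1 ((spec_iff hvw hvw' e).mp hc)), if_pos he.2]
          rw [Finset.prod_congr rfl hcong, Finset.prod_ite, Finset.prod_const, Finset.prod_const,
            one_pow, mul_one, Finset.filter_filter]
          have hseteq : (univ : Finset (EdgeIdx n)).filter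
              (fun e => (¬(e = E1 ∨ e = E2) ∧ (e.1.1 = v ∨ e.1.2 = v)) ∧ ω e = true) = SA := by
            rw [hSA]
            apply Finset.filter_congr
            intro e _
            tauto
          rw [hseteq]
        have hB : ∏ e ∈ ((univ : Finset (EdgeIdx n)).filter (fun e => ¬(e = E1 ∨ e = E2))).filter
            (fun e => ¬(e.1.1 = v ∨ e.1.2 = v)), gfun v w w' e (ω e) = 2 ^ SB.card := by
          rw [Finset.filter_filter]
          rw [← Finset.prod_filter_mul_prod_filter_not
            ((univ : Finset (EdgeIdx n)).filter
              (fun e => ¬(e = E1 ∨ e = E2) ∧ ¬(e.1.1 = v ∨ e.1.2 = v)))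
            (fun e => e.1.1 = w ∨ e.1.2 = w) (fun e => gfun v w w' e (ω e))]
          have hBw : ∏ e ∈ ((univ : Finset (EdgeIdx n)).filter
              (fun e => ¬(e = E1 ∨ e = E2) ∧ ¬(e.1.1 = v ∨ e.1.2 = v))).filter
              (fun e => e.1.1 = w ∨ e.1.2 = w), gfun v w w' e (ω e) = 2 ^ SB.card := by
            rw [Finset.filter_filter]
            have hcong : ∀ e ∈ (univ : Finset (EdgeIdx n)).filter
                (fun e => (¬(e = E1 ∨ e = E2) ∧ ¬(e.1.1 = v ∨ e.1.2 = v)) ∧ (e.1.1 = w ∨ e.1.2 = w)),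
                gfun v w w' e (ω e) = if ω e = true then (2 : ℝ) else 1 := by
              intro e he
              simp only [Finset.mem_filter, Finset.mem_univ, true_and] at he
              unfold gfun
              rw [if_neg (fun hc => he.1.1 ((spec_iff hvw hvw' e).mp hc)), if_neg he.1.2,
                if_pos he.2]
            rw [Finset.prod_congr rfl hcong, Finset.prod_ite, Finset.prod_const, Finset.prod_const,
              one_pow, mul_one, Finset.filter_filter]
            have hseteq : (univ : Finset (EdgeIdx n)).filter
                (fun e => ((¬(e = E1 ∨ e = E2) ∧ ¬(e.1.1 = v ∨ e.1.2 = v)) ∧ (e.1.1 = w ∨ e.1.2 = w)) ∧ ω e = true) = SB := by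
              rw [hSB]
              apply Finset.filter_congr
              intro e _
              tauto
            rw [hseteq]
          have hBrest : ∏ e ∈ ((univ : Finset (EdgeIdx n)).filter
              (fun e => ¬(e = E1 ∨ e = E2) ∧ ¬(e.1.1 = v ∨ e.1.2 = v))).filter
              (fun e => ¬(e.1.1 = w ∨ e.1.2 = w)), gfun v w w' e (ω e) = 1 := by
            apply Finset.prod_eq_one
            intro e he
            simp only [Finset.mem_filter, Finset.mem_univ, true_and] at he
            unfold gfun
            rw [if_neg (fun hc => he.1.1 ((spec_iff hvw hvw' e).mp hc)), if_neg he.1.2,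
              if_neg he.2]
          rw [hBw, hBrest, mul_one]
        rw [hA, hB]
      rw [hpart1, hpart2, one_mul]
    rw [hprod]
    have h2A : (0 : ℝ) < 2 ^ SA.card := by positivity
    rw [inv_pow, inv_mul_eq_div, le_div_iff₀ h2A, one_mul]
    exact pow_le_pow_right₀ (by norm_num) hAB

end ChungLuAux2

namespace ChungLuAux3
open ChungLuAux ChungLuAux2
variable {n : ℕ}

lemma clPr_nonneg (d : Fin n → ℕ)
    (hp : ∀ e : EdgeIdx n, (d e.1.1 : ℝ) * (d e.1.2 : ℝ) / (∑ u, (d u : ℝ)) ≤ 1)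
    (ω : EdgeIdx n → Bool) : 0 ≤ clPr d ω := by
  unfold clPr
  apply Finset.prod_nonneg
  intro e _
  split
  · positivity
  · linarith [hp e]

lemma clExp_mono (d : Fin n → ℕ) (f g : (EdgeIdx n → Bool) → ℝ)
    (hpr : ∀ ω, 0 ≤ clPr d ω) (h : ∀ ω, f ω ≤ g ω) : clExp d f ≤ clExp d g :=
  Finset.sum_le_sum fun ω _ => mul_le_mul_of_nonneg_left (h ω) (hpr ω)

lemma clExp_prod (d : Fin n → ℕ) (F : EdgeIdx n → Bool → ℝ) :
    clExp d (fun ω => ∏ e, F e (ω e)) =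
      ∏ e : EdgeIdx n,
        ((d e.1.1 : ℝ) * (d e.1.2 : ℝ) / (∑ u, (d u : ℝ)) * F e true +
          (1 - (d e.1.1 : ℝ) * (d e.1.2 : ℝ) / (∑ u, (d u : ℝ))) * F e false) := by
  unfold clExp clPr
  have h1 : ∀ ω : EdgeIdx n → Bool,
      (∏ e : EdgeIdx n, if ω e then (d e.1.1 : ℝ) * (d e.1.2 : ℝ) / (∑ u, (d u : ℝ))
        else 1 - (d e.1.1 : ℝ) * (d e.1.2 : ℝ) / (∑ u, (d u : ℝ))) * ∏ e, F e (ω e)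
      = ∏ e : EdgeIdx n,
          ((if ω e then (d e.1.1 : ℝ) * (d e.1.2 : ℝ) / (∑ u, (d u : ℝ))
            else 1 - (d e.1.1 : ℝ) * (d e.1.2 : ℝ) / (∑ u, (d u : ℝ))) * F e (ω e)) :=
    fun ω => (Finset.prod_mul_distrib).symm
  rw [Finset.sum_congr rfl (fun ω _ => h1 ω)]
  rw [← Fintype.prod_sum (fun (e : EdgeIdx n) (b : Bool) =>
    (if b then (d e.1.1 : ℝ) * (d e.1.2 : ℝ) / (∑ u, (d u : ℝ))
      else 1 - (d e.1.1 : ℝ) * (d e.1.2 : ℝ) / (∑ u, (d u : ℝ))) * F e b)]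
  refine Finset.prod_congr rfl fun e _ => ?_
  rw [Fintype.sum_bool]
  simp

lemma sum_edge_vertex (a : Fin n) (s : Finset (Fin n)) (ha : a ∉ s)
    (E : Finset (EdgeIdx n)) (f : Fin n → Fin n → ℝ) (hf : ∀ x y, f x y = f y x)
    (hE : ∀ e : EdgeIdx n, e ∈ E ↔ ((e.1.1 = a ∧ e.1.2 ∈ s) ∨ (e.1.2 = a ∧ e.1.1 ∈ s))) :
    ∑ u ∈ s, f a u = ∑ e ∈ E, f e.1.1 e.1.2 := by
  apply Finset.sum_bij (fun u hu => eIdx a u (fun h => ha (h ▸ hu)))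
  · intro u hu
    rw [hE]
    rcases eIdx_spec a u (fun h => ha (h ▸ hu)) with ⟨h1, h2⟩ | ⟨h1, h2⟩
    · exact Or.inl ⟨h1, by rw [h2]; exact hu⟩
    · exact Or.inr ⟨h2, by rw [h1]; exact hu⟩
  · intro u1 h1 u2 h2 hee
    exact eIdx_right_inj _ _ hee
  · intro e he
    rw [hE] at he
    rcases he with ⟨h1, h2⟩ | ⟨h1, h2⟩
    · exact ⟨e.1.2, h2, (eIdx_unique a e.1.2 (fun h => ha (h ▸ h2)) e (Or.inl ⟨h1, rfl⟩)).symm⟩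
    · exact ⟨e.1.1, h2, (eIdx_unique a e.1.1 (fun h => ha (h ▸ h2)) e (Or.inr ⟨rfl, h1⟩)).symm⟩
  · intro u hu
    rcases eIdx_spec a u (fun h => ha (h ▸ hu)) with ⟨h1, h2⟩ | ⟨h1, h2⟩
    · rw [h1, h2]
    · rw [h1, h2, hf]

end ChungLuAux3

namespace ChungLuAux4
open ChungLuAux ChungLuAux2 ChungLuAux3
variable {n : ℕ}

lemma basic_bounds (d : Fin n → ℕ) (v : Fin n) (hd1 : ∀ u, 0 < d u)
    (hd2 : ∀ u, (d u : ℝ) < Real.sqrt ((∑ u, (d u : ℝ)) / 2) / 2) (hdv4 : 4 ≤ d v) :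
    0 < (∑ u, (d u : ℝ)) ∧
      (∀ u, (d u : ℝ) ≤ (∑ u, (d u : ℝ)) / 32) ∧
      (∀ a b : Fin n, (d a : ℝ) * (d b : ℝ) / (∑ u, (d u : ℝ)) ≤ 1 / 8) := by
  set T := (∑ u, (d u : ℝ)) with hT
  have hT0 : 0 < T :=
    Finset.sum_pos (fun u _ => by exact_mod_cast hd1 u) ⟨v, Finset.mem_univ v⟩
  have h4 : (4 : ℝ) ≤ (d v : ℝ) := by exact_mod_cast hdv4
  have h8 : (8 : ℝ) < Real.sqrt (T / 2) := by
    have := hd2 v; linarith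
  have h64 : (64 : ℝ) < T / 2 := by
    have h := (Real.lt_sqrt (by norm_num : (0:ℝ) ≤ 8)).mp h8
    nlinarith
  have hsqle : Real.sqrt (T / 2) ≤ T / 16 := by
    have h1 : Real.sqrt (T / 2) ≤ Real.sqrt ((T / 16) ^ 2) :=
      Real.sqrt_le_sqrt (by nlinarith)
    rwa [Real.sqrt_sq (by linarith)] at h1
  refine ⟨hT0, fun u => by have := hd2 u; linarith, ?_⟩
  intro a b
  have ha := hd2 a
  have hb := hd2 b
  have hs : Real.sqrt (T / 2) * Real.sqrt (T / 2) = T / 2 :=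
    Real.mul_self_sqrt (by linarith)
  have hprod : (d a : ℝ) * (d b : ℝ) ≤ T / 8 := by
    have h1 : (d a : ℝ) * (d b : ℝ) ≤ (Real.sqrt (T/2)/2) * (Real.sqrt (T/2)/2) :=
      mul_le_mul (le_of_lt ha) (le_of_lt hb) (Nat.cast_nonneg _) (by positivity)
    nlinarith
  rw [div_le_iff₀ hT0]
  linarith

def hfun (d : Fin n → ℕ) (v w : Fin n) (e : EdgeIdx n) : ℝ :=
  if e.1.1 = v ∨ e.1.2 = v then
    (-(1/2)) * ((d e.1.1 : ℝ) * (d e.1.2 : ℝ) / (∑ u, (d u : ℝ)))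
  else if e.1.1 = w ∨ e.1.2 = w then (d e.1.1 : ℝ) * (d e.1.2 : ℝ) / (∑ u, (d u : ℝ))
  else 0

set_option maxHeartbeats 2000000 in
lemma prod_factor_bound (d : Fin n → ℕ) (v w w' : Fin n)
    (hvw : v ≠ w) (hvw' : v ≠ w') (hww' : w ≠ w')
    (hd1 : ∀ u, 0 < d u)
    (hd2 : ∀ u, (d u : ℝ) < Real.sqrt ((∑ u, (d u : ℝ)) / 2) / 2)
    (hdv4 : 4 ≤ d v) (hdw : (d w : ℝ) ≤ (d v : ℝ) / 10) :
    ∏ e : EdgeIdx n,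
        ((d e.1.1 : ℝ) * (d e.1.2 : ℝ) / (∑ u, (d u : ℝ)) * gfun v w w' e true +
          (1 - (d e.1.1 : ℝ) * (d e.1.2 : ℝ) / (∑ u, (d u : ℝ))) * gfun v w w' e false)
      ≤ Real.exp (-(1/4) * (d v : ℝ)) * ((d v : ℝ) ^ 2 * (d w : ℝ) * (d w' : ℝ)) /
          (∑ u, (d u : ℝ)) ^ 2 := by
  obtain ⟨hT0, hd32, hple⟩ := basic_bounds d v hd1 hd2 hdv4
  set T := (∑ u, (d u : ℝ)) with hT
  set E1 := eIdx v w hvw with hE1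
  set E2 := eIdx v w' hvw' with hE2
  have hE12 : E1 ≠ E2 := fun hh => hww' (eIdx_right_inj hvw hvw' hh)
  have hdnn : ∀ u : Fin n, (0:ℝ) ≤ (d u : ℝ) := fun u => Nat.cast_nonneg _
  have hpnn : ∀ a b : Fin n, (0:ℝ) ≤ (d a : ℝ) * (d b : ℝ) / T := fun a b => by positivity
  rw [← Finset.prod_filter_mul_prod_filter_not univ (fun e => e = E1 ∨ e = E2)
    (fun e => ((d e.1.1 : ℝ) * (d e.1.2 : ℝ) / T * gfun v w w' e true +
      (1 - (d e.1.1 : ℝ) * (d e.1.2 : ℝ) / T) * gfun v w w' e false))]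
  -- special part
  have hfil : (univ : Finset (EdgeIdx n)).filter (fun e => e = E1 ∨ e = E2) = {E1, E2} := by
    ext e; simp
  have hgE1t : gfun v w w' E1 true = 1 := by
    unfold gfun; rw [if_pos ((spec_iff hvw hvw' E1).mpr (Or.inl hE1))]; norm_num
  have hgE1f : gfun v w w' E1 false = 0 := by
    unfold gfun; rw [if_pos ((spec_iff hvw hvw' E1).mpr (Or.inl hE1))]; norm_num
  have hgE2t : gfun v w w' E2 true = 1 := by
    unfold gfun; rw [if_pos ((spec_iff hvw hvw' E2).mpr (Or.inr hE2))]; norm_num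
  have hgE2f : gfun v w w' E2 false = 0 := by
    unfold gfun; rw [if_pos ((spec_iff hvw hvw' E2).mpr (Or.inr hE2))]; norm_num
  have hp1 : (d E1.1.1 : ℝ) * (d E1.1.2 : ℝ) = (d v : ℝ) * (d w : ℝ) := by
    rcases eIdx_spec v w hvw with ⟨h1, h2⟩ | ⟨h1, h2⟩ <;> rw [← hE1] at h1 h2 <;>
      rw [h1, h2] <;> ring
  have hp2 : (d E2.1.1 : ℝ) * (d E2.1.2 : ℝ) = (d v : ℝ) * (d w' : ℝ) := by
    rcases eIdx_spec v w' hvw' with ⟨h1, h2⟩ | ⟨h1, h2⟩ <;> rw [← hE2] at h1 h2 <;>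
      rw [h1, h2] <;> ring
  have hpart1 : ∏ e ∈ (univ : Finset (EdgeIdx n)).filter (fun e => e = E1 ∨ e = E2),
      ((d e.1.1 : ℝ) * (d e.1.2 : ℝ) / T * gfun v w w' e true +
        (1 - (d e.1.1 : ℝ) * (d e.1.2 : ℝ) / T) * gfun v w w' e false)
      = ((d v : ℝ) * (d w : ℝ) / T) * ((d v : ℝ) * (d w' : ℝ) / T) := by
    rw [hfil, Finset.prod_pair hE12, hgE1t, hgE1f, hgE2t, hgE2f, hp1, hp2]
    ring
  rw [hpart1]
  -- non-special part : bound by exponential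
  have hpart2 : ∏ e ∈ (univ : Finset (EdgeIdx n)).filter (fun e => ¬(e = E1 ∨ e = E2)),
      ((d e.1.1 : ℝ) * (d e.1.2 : ℝ) / T * gfun v w w' e true +
        (1 - (d e.1.1 : ℝ) * (d e.1.2 : ℝ) / T) * gfun v w w' e false)
      ≤ Real.exp (∑ e ∈ (univ : Finset (EdgeIdx n)).filter (fun e => ¬(e = E1 ∨ e = E2)),
          hfun d v w e) := by
    rw [Real.exp_sum]
    apply Finset.prod_le_prod
    · intro e _
      have h18 := hple e.1.1 e.1.2
      have h0 := hpnn e.1.1 e.1.2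
      exact add_nonneg (mul_nonneg h0 (gfun_nonneg v w w' e true))
        (mul_nonneg (by linarith) (gfun_nonneg v w w' e false))
    · intro e he
      simp only [Finset.mem_filter, Finset.mem_univ, true_and] at he
      have h18 := hple e.1.1 e.1.2
      have h0 := hpnn e.1.1 e.1.2
      unfold hfun
      by_cases htv : e.1.1 = v ∨ e.1.2 = v
      · have hraw : ¬((e.1.1 = v ∨ e.1.2 = v) ∧
            (e.1.1 = w ∨ e.1.2 = w ∨ e.1.1 = w' ∨ e.1.2 = w')) :=
          fun hc => he ((spec_iff hvw hvw' e).mp hc)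
        have hgt : gfun v w w' e true = 2⁻¹ := by
          unfold gfun; rw [if_neg hraw, if_pos htv]; norm_num
        have hgf : gfun v w w' e false = 1 := by
          unfold gfun; rw [if_neg hraw, if_pos htv]; norm_num
        rw [hgt, hgf, if_pos htv]
        have hexp := Real.add_one_le_exp
          ((-(1/2)) * ((d e.1.1 : ℝ) * (d e.1.2 : ℝ) / T))
        linarith
      · by_cases htw : e.1.1 = w ∨ e.1.2 = w
        · have hraw : ¬((e.1.1 = v ∨ e.1.2 = v) ∧
              (e.1.1 = w ∨ e.1.2 = w ∨ e.1.1 = w' ∨ e.1.2 = w')) := fun hc => htv hc.1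
          have hgt : gfun v w w' e true = 2 := by
            unfold gfun; rw [if_neg hraw, if_neg htv, if_pos htw]; norm_num
          have hgf : gfun v w w' e false = 1 := by
            unfold gfun; rw [if_neg hraw, if_neg htv, if_pos htw]; norm_num
          rw [hgt, hgf, if_neg htv, if_pos htw]
          have hexp := Real.add_one_le_exp ((d e.1.1 : ℝ) * (d e.1.2 : ℝ) / T)
          linarith
        · have hraw : ¬((e.1.1 = v ∨ e.1.2 = v) ∧
              (e.1.1 = w ∨ e.1.2 = w ∨ e.1.1 = w' ∨ e.1.2 = w')) := fun hc => htv hc.1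
          have hgt : gfun v w w' e true = 1 := by
            unfold gfun; rw [if_neg hraw, if_neg htv, if_neg htw]
          have hgf : gfun v w w' e false = 1 := by
            unfold gfun; rw [if_neg hraw, if_neg htv, if_neg htw]
          rw [hgt, hgf, if_neg htv, if_neg htw, Real.exp_zero]
          linarith
  -- vertex sums
  have hsv : ∑ u ∈ univ.filter (fun u => ¬(u = v ∨ u = w ∨ u = w')), (d u : ℝ)
      = T - ((d v : ℝ) + (d w : ℝ) + (d w' : ℝ)) := by
    have hsplit := Finset.sum_filter_add_sum_filter_not (univ : Finset (Fin n))
      (fun u => u = v ∨ u = w ∨ u = w') (fun u => (d u : ℝ))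
    have hc : (univ : Finset (Fin n)).filter (fun u => u = v ∨ u = w ∨ u = w') = {v, w, w'} := by
      ext u; simp
    rw [hc] at hsplit
    have hsum3 : ∑ u ∈ ({v, w, w'} : Finset (Fin n)), (d u : ℝ)
        = (d v : ℝ) + (d w : ℝ) + (d w' : ℝ) := by
      rw [Finset.sum_insert (by simp [hvw, hvw']), Finset.sum_pair hww']
      ring
    rw [hsum3, ← hT] at hsplit
    linarith
  have hsw : ∑ u ∈ univ.filter (fun u => ¬(u = w ∨ u = v)), (d u : ℝ)
      = T - ((d w : ℝ) + (d v : ℝ)) := by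
    have hsplit := Finset.sum_filter_add_sum_filter_not (univ : Finset (Fin n))
      (fun u => u = w ∨ u = v) (fun u => (d u : ℝ))
    have hc : (univ : Finset (Fin n)).filter (fun u => u = w ∨ u = v) = {w, v} := by
      ext u; simp
    rw [hc, Finset.sum_pair (Ne.symm hvw), ← hT] at hsplit
    linarith
  -- edge-set characterizations
  have hEvchar : ∀ e : EdgeIdx n,
      e ∈ (univ : Finset (EdgeIdx n)).filter
        (fun e => ¬(e = E1 ∨ e = E2) ∧ (e.1.1 = v ∨ e.1.2 = v)) ↔
      ((e.1.1 = v ∧ e.1.2 ∈ univ.filter (fun u => ¬(u = v ∨ u = w ∨ u = w'))) ∨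
        (e.1.2 = v ∧ e.1.1 ∈ univ.filter (fun u => ¬(u = v ∨ u = w ∨ u = w')))) := by
    intro e
    simp only [Finset.mem_filter, Finset.mem_univ, true_and]
    constructor
    · rintro ⟨hns, htv⟩
      rcases htv with h1 | h1
      · refine Or.inl ⟨h1, ?_⟩
        rintro (h2 | h2 | h2)
        · exact e.2.ne (h1.trans h2.symm)
        · exact hns (Or.inl (by rw [hE1]; exact touch_touch_eq hvw (Or.inl h1) (Or.inr h2)))
        · exact hns (Or.inr (by rw [hE2]; exact touch_touch_eq hvw' (Or.inl h1) (Or.inr h2)))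
      · refine Or.inr ⟨h1, ?_⟩
        rintro (h2 | h2 | h2)
        · exact e.2.ne (h2.trans h1.symm)
        · exact hns (Or.inl (by rw [hE1]; exact touch_touch_eq hvw (Or.inr h1) (Or.inl h2)))
        · exact hns (Or.inr (by rw [hE2]; exact touch_touch_eq hvw' (Or.inr h1) (Or.inl h2)))
    · rintro (⟨h1, hs⟩ | ⟨h1, hs⟩)
      · refine ⟨?_, Or.inl h1⟩
        rintro (rfl | rfl)
        · rcases eIdx_touch_right v w hvw with h2 | h2 <;> rw [← hE1] at h2
          · exact hvw (h1.symm.trans h2)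
          · exact hs (Or.inr (Or.inl h2))
        · rcases eIdx_touch_right v w' hvw' with h2 | h2 <;> rw [← hE2] at h2
          · exact hvw' (h1.symm.trans h2)
          · exact hs (Or.inr (Or.inr h2))
      · refine ⟨?_, Or.inr h1⟩
        rintro (rfl | rfl)
        · rcases eIdx_touch_right v w hvw with h2 | h2 <;> rw [← hE1] at h2
          · exact hs (Or.inr (Or.inl h2))
          · exact hvw (h1.symm.trans h2)
        · rcases eIdx_touch_right v w' hvw' with h2 | h2 <;> rw [← hE2] at h2
          · exact hs (Or.inr (Or.inr h2))
          · exact hvw' (h1.symm.trans h2)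
  have hEwchar : ∀ e : EdgeIdx n,
      e ∈ (univ : Finset (EdgeIdx n)).filter
        (fun e => ¬(e = E1 ∨ e = E2) ∧ ¬(e.1.1 = v ∨ e.1.2 = v) ∧ (e.1.1 = w ∨ e.1.2 = w)) ↔
      ((e.1.1 = w ∧ e.1.2 ∈ univ.filter (fun u => ¬(u = w ∨ u = v))) ∨
        (e.1.2 = w ∧ e.1.1 ∈ univ.filter (fun u => ¬(u = w ∨ u = v)))) := by
    intro e
    simp only [Finset.mem_filter, Finset.mem_univ, true_and]
    constructor
    · rintro ⟨hns, hntv, htw⟩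
      rcases htw with h1 | h1
      · refine Or.inl ⟨h1, ?_⟩
        rintro (h2 | h2)
        · exact e.2.ne (h1.trans h2.symm)
        · exact hntv (Or.inr h2)
      · refine Or.inr ⟨h1, ?_⟩
        rintro (h2 | h2)
        · exact e.2.ne (h2.trans h1.symm)
        · exact hntv (Or.inl h2)
    · rintro (⟨h1, hs⟩ | ⟨h1, hs⟩)
      · have hntv : ¬(e.1.1 = v ∨ e.1.2 = v) := by
          rintro (h2 | h2)
          · exact hvw (h2.symm.trans h1)
          · exact hs (Or.inr h2)
        refine ⟨?_, hntv, Or.inl h1⟩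
        rintro (rfl | rfl)
        · have h2 := eIdx_touch_left v w hvw
          rw [← hE1] at h2
          exact hntv h2
        · have h2 := eIdx_touch_left v w' hvw'
          rw [← hE2] at h2
          exact hntv h2
      · have hntv : ¬(e.1.1 = v ∨ e.1.2 = v) := by
          rintro (h2 | h2)
          · exact hs (Or.inr h2)
          · exact hvw (h2.symm.trans h1)
        refine ⟨?_, hntv, Or.inr h1⟩
        rintro (rfl | rfl)
        · have h2 := eIdx_touch_left v w hvw
          rw [← hE1] at h2
          exact hntv h2
        · have h2 := eIdx_touch_left v w' hvw'
          rw [← hE2] at h2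
          exact hntv h2
  -- the three partial sums
  have hAval : ∑ e ∈ ((univ : Finset (EdgeIdx n)).filter (fun e => ¬(e = E1 ∨ e = E2))).filter
      (fun e => e.1.1 = v ∨ e.1.2 = v), hfun d v w e
      = (-(1/2)) * ((d v : ℝ) / T * (T - ((d v : ℝ) + (d w : ℝ) + (d w' : ℝ)))) := by
    rw [Finset.filter_filter]
    have hcong : ∀ e ∈ (univ : Finset (EdgeIdx n)).filter
        (fun e => ¬(e = E1 ∨ e = E2) ∧ (e.1.1 = v ∨ e.1.2 = v)),
        hfun d v w e = (-(1/2)) * ((d e.1.1 : ℝ) * (d e.1.2 : ℝ) / T) := by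
      intro e he
      simp only [Finset.mem_filter, Finset.mem_univ, true_and] at he
      unfold hfun
      rw [if_pos he.2, ← hT]
    rw [Finset.sum_congr rfl hcong, ← Finset.mul_sum]
    have hEv := sum_edge_vertex v (univ.filter fun u => ¬(u = v ∨ u = w ∨ u = w'))
      (by simp) _ (fun x y => (d x : ℝ) * (d y : ℝ) / T) (fun x y => by ring) hEvchar
    rw [← hEv]
    have hpull : ∑ u ∈ univ.filter (fun u => ¬(u = v ∨ u = w ∨ u = w')),
        (d v : ℝ) * (d u : ℝ) / T = (d v : ℝ) / T *
          ∑ u ∈ univ.filter (fun u => ¬(u = v ∨ u = w ∨ u = w')), (d u : ℝ) := by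
      rw [Finset.mul_sum]
      exact Finset.sum_congr rfl fun u _ => by ring
    rw [hpull, hsv]
  have hBval : ∑ e ∈ (((univ : Finset (EdgeIdx n)).filter (fun e => ¬(e = E1 ∨ e = E2))).filter
      (fun e => ¬(e.1.1 = v ∨ e.1.2 = v))).filter (fun e => e.1.1 = w ∨ e.1.2 = w), hfun d v w e
      = (d w : ℝ) / T * (T - ((d w : ℝ) + (d v : ℝ))) := by
    rw [Finset.filter_filter, Finset.filter_filter]
    have hcong : ∀ e ∈ (univ : Finset (EdgeIdx n)).filter
        (fun e => ¬(e = E1 ∨ e = E2) ∧ ¬(e.1.1 = v ∨ e.1.2 = v) ∧ (e.1.1 = w ∨ e.1.2 = w)),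
        hfun d v w e = (d e.1.1 : ℝ) * (d e.1.2 : ℝ) / T := by
      intro e he
      simp only [Finset.mem_filter, Finset.mem_univ, true_and] at he
      unfold hfun
      rw [if_neg he.2.1, if_pos he.2.2, ← hT]
    rw [Finset.sum_congr rfl hcong]
    have hEw := sum_edge_vertex w (univ.filter fun u => ¬(u = w ∨ u = v))
      (by simp) _ (fun x y => (d x : ℝ) * (d y : ℝ) / T) (fun x y => by ring) hEwchar
    rw [← hEw]
    have hpull : ∑ u ∈ univ.filter (fun u => ¬(u = w ∨ u = v)),
        (d w : ℝ) * (d u : ℝ) / T = (d w : ℝ) / T *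
          ∑ u ∈ univ.filter (fun u => ¬(u = w ∨ u = v)), (d u : ℝ) := by
      rw [Finset.mul_sum]
      exact Finset.sum_congr rfl fun u _ => by ring
    rw [hpull, hsw]
  have hCval : ∑ e ∈ (((univ : Finset (EdgeIdx n)).filter (fun e => ¬(e = E1 ∨ e = E2))).filter
      (fun e => ¬(e.1.1 = v ∨ e.1.2 = v))).filter (fun e => ¬(e.1.1 = w ∨ e.1.2 = w)),
      hfun d v w e = 0 := by
    apply Finset.sum_eq_zero
    intro e he
    simp only [Finset.mem_filter, Finset.mem_univ, true_and] at he
    unfold hfun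
    rw [if_neg he.1.2, if_neg he.2]
  -- total sum bound
  have hsum : ∑ e ∈ (univ : Finset (EdgeIdx n)).filter (fun e => ¬(e = E1 ∨ e = E2)),
      hfun d v w e ≤ -(1/4) * (d v : ℝ) := by
    rw [← Finset.sum_filter_add_sum_filter_not
      ((univ : Finset (EdgeIdx n)).filter (fun e => ¬(e = E1 ∨ e = E2)))
      (fun e => e.1.1 = v ∨ e.1.2 = v) (hfun d v w)]
    rw [hAval]
    rw [← Finset.sum_filter_add_sum_filter_not
      (((univ : Finset (EdgeIdx n)).filter (fun e => ¬(e = E1 ∨ e = E2))).filter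
        (fun e => ¬(e.1.1 = v ∨ e.1.2 = v)))
      (fun e => e.1.1 = w ∨ e.1.2 = w) (hfun d v w)]
    rw [hBval, hCval, add_zero]
    have hTne : T ≠ 0 := ne_of_gt hT0
    have e1 : (d w : ℝ) / T * (T - ((d w : ℝ) + (d v : ℝ))) ≤ (d w : ℝ) := by
      have h1 : T - ((d w : ℝ) + (d v : ℝ)) ≤ T := by
        have := hdnn w; have := hdnn v; linarith
      calc (d w : ℝ) / T * (T - ((d w : ℝ) + (d v : ℝ))) ≤ (d w : ℝ) / T * T :=
            mul_le_mul_of_nonneg_left h1 (by positivity)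
        _ = (d w : ℝ) := div_mul_cancel₀ _ hTne
    have e2 : (29/32) * T ≤ T - ((d v : ℝ) + (d w : ℝ) + (d w' : ℝ)) := by
      have := hd32 v; have := hd32 w; have := hd32 w'; linarith
    have e3 : (d v : ℝ) / T * ((29/32) * T) ≤
        (d v : ℝ) / T * (T - ((d v : ℝ) + (d w : ℝ) + (d w' : ℝ))) :=
      mul_le_mul_of_nonneg_left e2 (by positivity)
    have e4 : (d v : ℝ) / T * ((29/32) * T) = (29/32) * (d v : ℝ) := by
      field_simp
    have hdvnn := hdnn v
    linarith [hdw]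
  -- finish
  have hchain : ∏ e ∈ (univ : Finset (EdgeIdx n)).filter (fun e => ¬(e = E1 ∨ e = E2)),
      ((d e.1.1 : ℝ) * (d e.1.2 : ℝ) / T * gfun v w w' e true +
        (1 - (d e.1.1 : ℝ) * (d e.1.2 : ℝ) / T) * gfun v w w' e false)
      ≤ Real.exp (-(1/4) * (d v : ℝ)) := le_trans hpart2 (Real.exp_le_exp.mpr hsum)
  have hprefnn : (0:ℝ) ≤ (d v : ℝ) * (d w : ℝ) / T * ((d v : ℝ) * (d w' : ℝ) / T) := by
    positivity
  refine le_trans (mul_le_mul_of_nonneg_left hchain hprefnn) (le_of_eq ?_)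
  have hTne : T ≠ 0 := ne_of_gt hT0
  field_simp

end ChungLuAux4


/-- There is a constant `β > 0` such that over the Chung–Lu model `G(d)`
with MinBucket buckets formed: for any three distinct vertices `v, w, w'` with `d_v ≥ 4`
and `d_w ≤ d_v / 10`,
`E[Y_{v,w} Y_{v,w'}] ≤ 2 exp(-β d_v) d_v² d_w d_{w'} / (4 m²)` where `m = (∑ d_u)/2`. -/
theorem chungLu_bucket_pair_small_degree_bound :
    ∃ β : ℝ, 0 < β ∧
      ∀ (n : ℕ) (d : Fin n → ℕ),
        (∀ v, 0 < d v) →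
        (∀ v, (d v : ℝ) < Real.sqrt ((∑ u, (d u : ℝ)) / 2) / 2) →
        ∀ v w w' : Fin n, v ≠ w → v ≠ w' → w ≠ w' →
          4 ≤ d v →
          (d w : ℝ) ≤ (d v : ℝ) / 10 →
          clExp d (fun ω => clY ω v w * clY ω v w') ≤
            2 * Real.exp (-β * d v) * (d v : ℝ) ^ 2 * (d w : ℝ) * (d w' : ℝ) /
              (4 * ((∑ u, (d u : ℝ)) / 2) ^ 2) := by
  refine ⟨1/4, by norm_num, ?_⟩
  intro n d hd1 hd2 v w w' hvw hvw' hww' hdv4 hdw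
  obtain ⟨hT0, hd32, hple⟩ := ChungLuAux4.basic_bounds d v hd1 hd2 hdv4
  have hpr : ∀ ω, 0 ≤ clPr d ω :=
    ChungLuAux3.clPr_nonneg d (fun e => le_trans (hple e.1.1 e.1.2) (by norm_num))
  have h1 := ChungLuAux3.clExp_mono d _ _ hpr
    (fun ω => ChungLuAux2.pointwise v w w' hvw hvw' hww' ω)
  rw [ChungLuAux3.clExp_prod d (ChungLuAux2.gfun v w w')] at h1
  have h2 := ChungLuAux4.prod_factor_bound d v w w' hvw hvw' hww' hd1 hd2 hdv4 hdw
  have hfin : Real.exp (-(1/4) * (d v : ℝ)) * ((d v : ℝ)^2 * (d w : ℝ) * (d w' : ℝ)) /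
      (∑ u, (d u : ℝ))^2 ≤
      2 * Real.exp (-(1/4) * (d v : ℝ)) * (d v : ℝ)^2 * (d w : ℝ) * (d w' : ℝ) /
        (4 * ((∑ u, (d u : ℝ)) / 2)^2) := by
    have hden : 4 * ((∑ u, (d u : ℝ)) / 2)^2 = (∑ u, (d u : ℝ))^2 := by ring
    rw [hden]
    have hx : (0:ℝ) ≤ Real.exp (-(1/4) * (d v : ℝ)) *
        ((d v : ℝ)^2 * (d w : ℝ) * (d w' : ℝ)) / (∑ u, (d u : ℝ))^2 := by positivity
    have heq : 2 * Real.exp (-(1/4) * (d v : ℝ)) * (d v : ℝ)^2 * (d w : ℝ) * (d w' : ℝ) /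
        (∑ u, (d u : ℝ))^2
        = 2 * (Real.exp (-(1/4) * (d v : ℝ)) *
            ((d v : ℝ)^2 * (d w : ℝ) * (d w' : ℝ)) / (∑ u, (d u : ℝ))^2) := by ring
    rw [heq]
    linarith
  exact le_trans h1 (le_trans h2 hfin)
end
end
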